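/- arXiv:1903.00651 — 6 statements merged into one kernel-verified Lean document; each statement's English description precedes it below -/
import Mathlib

section
/- For all z, w in the open unit ball of ℂⁿ, the pseudo-hyperbolic distance satisfies ρ(z,w) = |σ_z(w)| ≤ |z - w| / |1 - ⟨z,w⟩|. -/
/-!
The numerator of `σ_z(w)` is `z - w` with its component orthogonal to `z` scaled by
`√(1 - |z|²) ≤ 1`; by Pythagoras this does not increase the norm. The denominators agree
because `1 - ⟨z,w⟩` and `1 - ⟨w,z⟩` are complex conjugates.
-/

open MeasureTheory
open scoped ComplexConjugate ENNReal

noncomputable section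
open scoped Classical

/-- Orthogonal projection of `w` onto the complex line spanned by `z`
(with the convention `P_0 = 0`). -/
def Pz {n : ℕ} (z w : EuclideanSpace ℂ (Fin n)) : EuclideanSpace ℂ (Fin n) :=
  if z = 0 then 0 else ((inner ℂ z w : ℂ) / (‖z‖ : ℂ) ^ 2) • z

/-- `Q_z = I - P_z`. -/
def Qz {n : ℕ} (z w : EuclideanSpace ℂ (Fin n)) : EuclideanSpace ℂ (Fin n) :=
  w - Pz z w

/-- The Möbius automorphism `σ_z` of the unit ball interchanging `0` and `z`:
`σ_z(w) = (z - P_z w - √(1-|z|²) Q_z w)/(1 - ⟨w,z⟩)`.  (Here the paper's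
Hermitian product `⟨w,z⟩ = Σ wⱼ conj zⱼ` is Mathlib's `inner z w`.) -/
def moebius {n : ℕ} (z w : EuclideanSpace ℂ (Fin n)) : EuclideanSpace ℂ (Fin n) :=
  (1 - (inner ℂ z w : ℂ))⁻¹ • (z - Pz z w - Real.sqrt (1 - ‖z‖ ^ 2) • Qz z w)

/-- The pseudo-hyperbolic distance `ρ(z,w) = |σ_z(w)|`. -/
def pseudoDist {n : ℕ} (z w : EuclideanSpace ℂ (Fin n)) : ℝ :=
  ‖moebius z w‖
open scoped InnerProductSpace

section Compression

variable {𝕜 E : Type*} [RCLike 𝕜] [NormedAddCommGroup E] [InnerProductSpace 𝕜 E]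

theorem norm_sub_smul_le_norm_sub_of_inner_eq_zero {a q : E} (h : ⟪a, q⟫_𝕜 = 0) {t : 𝕜}
    (ht : ‖t‖ ≤ 1) : ‖a - t • q‖ ≤ ‖a - q‖ := by
  have hpyth : ∀ s : 𝕜, ‖a - s • q‖ ^ 2 = ‖a‖ ^ 2 + ‖s‖ ^ 2 * ‖q‖ ^ 2 := fun s => by
    rw [sub_eq_add_neg, sq, norm_add_sq_eq_norm_sq_add_norm_sq_of_inner_eq_zero (𝕜 := 𝕜) a _
      (by rw [inner_neg_right, inner_smul_right, h, mul_zero, neg_zero]), norm_neg, norm_smul]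
    ring
  have h1 := hpyth 1
  rw [one_smul, norm_one] at h1
  refine (sq_le_sq₀ (norm_nonneg _) (norm_nonneg _)).mp ?_
  rw [hpyth, h1]
  gcongr

theorem norm_sub_starProjection_sub_smul_le {K : Submodule 𝕜 E} [K.HasOrthogonalProjection]
    {x : E} (hx : x ∈ K) (y : E) {t : 𝕜} (ht : ‖t‖ ≤ 1) :
    ‖x - K.starProjection y - t • (y - K.starProjection y)‖ ≤ ‖x - y‖ := by
  have horth : ⟪x - K.starProjection y, y - K.starProjection y⟫_𝕜 = 0 :=
    K.inner_right_of_mem_orthogonal (K.sub_mem hx (K.starProjection_apply_mem y))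
      (K.sub_starProjection_mem_orthogonal y)
  calc _ ≤ ‖x - K.starProjection y - (y - K.starProjection y)‖ :=
        norm_sub_smul_le_norm_sub_of_inner_eq_zero horth ht
    _ = ‖x - y‖ := by rw [sub_sub_sub_cancel_right]

end Compression

theorem Pz_eq_starProjection {n : ℕ} (z w : EuclideanSpace ℂ (Fin n)) :
    Pz z w = (ℂ ∙ z).starProjection w := by
  rw [Submodule.starProjection_singleton, Pz]
  split_ifs with hz
  · simp [hz]
  · push_cast; rfl

theorem norm_one_sub_inner_comm {n : ℕ} (z w : EuclideanSpace ℂ (Fin n)) :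
    ‖1 - ⟪w, z⟫_ℂ‖ = ‖1 - ⟪z, w⟫_ℂ‖ := by
  rw [← Complex.norm_conj, map_sub, map_one, inner_conj_symm]

theorem norm_moebius_numerator_le {n : ℕ} (z w : EuclideanSpace ℂ (Fin n)) :
    ‖z - Pz z w - Real.sqrt (1 - ‖z‖ ^ 2) • Qz z w‖ ≤ ‖z - w‖ := by
  have hsqrt : ‖(Real.sqrt (1 - ‖z‖ ^ 2) : ℂ)‖ ≤ 1 := by
    rw [Complex.norm_of_nonneg (Real.sqrt_nonneg _)]
    exact Real.sqrt_le_one.mpr (sub_le_self _ (sq_nonneg _))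
  rw [Qz, Pz_eq_starProjection, ← Complex.coe_smul]
  exact norm_sub_starProjection_sub_smul_le (Submodule.mem_span_singleton_self z) w hsqrt

theorem pseudoDist_le_general {n : ℕ} (z w : EuclideanSpace ℂ (Fin n)) :
    pseudoDist z w ≤ ‖z - w‖ / ‖(1 - (inner ℂ w z : ℂ))‖ := by
  rw [pseudoDist, moebius, norm_smul, norm_inv, ← div_eq_inv_mul, norm_one_sub_inner_comm]
  exact div_le_div_of_nonneg_right (norm_moebius_numerator_le z w) (norm_nonneg _)

theorem pseudoDist_le {n : ℕ} (z w : EuclideanSpace ℂ (Fin n))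
    (hz : ‖z‖ < 1) (hw : ‖w‖ < 1) :
    pseudoDist z w ≤ ‖z - w‖ / ‖(1 - (inner ℂ w z : ℂ))‖ :=
  pseudoDist_le_general z w
end
end

section
/- In the unit disk of ℂ, for all z, w, a in the disk, the pseudo-hyperbolic distance ρ(z,w) = |(z-w)/(1 - conj(w) z)| satisfies ρ(z,w) ≤ (ρ(z,a) + ρ(a,w)) / (1 + ρ(z,a) ρ(a,w)). -/
/-! The key identity is `‖1 - w̄ z‖² = ‖z - w‖² + (1 - ‖z‖²)(1 - ‖w‖²)`.
The Möbius involution `φ_a z = (a - z) / (1 - ā z)` preserves `ρ` and satisfies `‖φ_a z‖ = ρ(z, a)`,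
which reduces the claim to `a = 0`: `ρ(u, v) ≤ (‖u‖ + ‖v‖) / (1 + ‖u‖‖v‖)`. After squaring, the
identity and `(1 + ‖u‖‖v‖)² = (‖u‖ + ‖v‖)² + (1 - ‖u‖²)(1 - ‖v‖²)` turn this into the Euclidean
triangle inequality `‖u - v‖ ≤ ‖u‖ + ‖v‖`. -/

open scoped ComplexConjugate

noncomputable section

/-- The pseudo-hyperbolic distance on the unit disk. -/
def pseudoDistD (z w : ℂ) : ℝ := ‖z - w‖ / ‖1 - conj w * z‖

namespace Complex

theorem sq_norm_one_sub_conj_mul (z w : ℂ) :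
    ‖1 - conj w * z‖ ^ 2 = ‖z - w‖ ^ 2 + (1 - ‖z‖ ^ 2) * (1 - ‖w‖ ^ 2) := by
  simp only [Complex.sq_norm, normSq_apply, sub_re, sub_im, mul_re, mul_im, conj_re, conj_im,
    one_re, one_im]
  ring

theorem norm_sub_lt_norm_one_sub_conj_mul {z w : ℂ} (hz : ‖z‖ < 1) (hw : ‖w‖ < 1) :
    ‖z - w‖ < ‖1 - conj w * z‖ := by
  have hP : 0 < (1 - ‖z‖ ^ 2) * (1 - ‖w‖ ^ 2) :=
    mul_pos (by nlinarith [norm_nonneg z]) (by nlinarith [norm_nonneg w])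
  refine lt_of_pow_lt_pow_left₀ 2 (norm_nonneg _) ?_
  rw [sq_norm_one_sub_conj_mul]
  linarith

theorem one_sub_conj_mul_ne_zero {z w : ℂ} (hz : ‖z‖ < 1) (hw : ‖w‖ < 1) :
    1 - conj w * z ≠ 0 :=
  norm_pos_iff.mp ((norm_nonneg _).trans_lt (norm_sub_lt_norm_one_sub_conj_mul hz hw))

theorem norm_sub_mul_one_add_mul_le {u v : ℂ} (hu : ‖u‖ ≤ 1) (hv : ‖v‖ ≤ 1) :
    ‖u - v‖ * (1 + ‖u‖ * ‖v‖) ≤ (‖u‖ + ‖v‖) * ‖1 - conj v * u‖ := by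
  have hP : 0 ≤ (1 - ‖u‖ ^ 2) * (1 - ‖v‖ ^ 2) :=
    mul_nonneg (by nlinarith [norm_nonneg u]) (by nlinarith [norm_nonneg v])
  have htriangle : ‖u - v‖ ^ 2 ≤ (‖u‖ + ‖v‖) ^ 2 :=
    pow_le_pow_left₀ (norm_nonneg _) (norm_sub_le u v) 2
  have hsq : (1 + ‖u‖ * ‖v‖) ^ 2 = (‖u‖ + ‖v‖) ^ 2 + (1 - ‖u‖ ^ 2) * (1 - ‖v‖ ^ 2) := by ring
  refine le_of_pow_le_pow_left₀ two_ne_zero (by positivity) ?_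
  rw [mul_pow, mul_pow, sq_norm_one_sub_conj_mul, hsq]
  nlinarith [mul_le_mul_of_nonneg_right htriangle hP]

end Complex

open Complex

theorem pseudoDistD_comm (z w : ℂ) : pseudoDistD z w = pseudoDistD w z := by
  rw [pseudoDistD, pseudoDistD, norm_sub_rev, ← norm_conj (1 - conj z * w)]
  simp only [map_sub, map_mul, map_one, conj_conj, mul_comm]

theorem pseudoDistD_lt_one {z w : ℂ} (hz : ‖z‖ < 1) (hw : ‖w‖ < 1) : pseudoDistD z w < 1 :=
  (div_lt_one (norm_pos_iff.mpr (one_sub_conj_mul_ne_zero hz hw))).mpr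
    (norm_sub_lt_norm_one_sub_conj_mul hz hw)

theorem pseudoDistD_le_add_div_one_add_mul {u v : ℂ} (hu : ‖u‖ < 1) (hv : ‖v‖ < 1) :
    pseudoDistD u v ≤ (‖u‖ + ‖v‖) / (1 + ‖u‖ * ‖v‖) := by
  rw [pseudoDistD, div_le_div_iff₀ (norm_pos_iff.mpr (one_sub_conj_mul_ne_zero hu hv))
    (by positivity)]
  exact norm_sub_mul_one_add_mul_le hu.le hv.le

def diskMobius (a z : ℂ) : ℂ := (a - z) / (1 - conj a * z)

theorem norm_diskMobius (a z : ℂ) : ‖diskMobius a z‖ = pseudoDistD z a := by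
  rw [diskMobius, pseudoDistD, norm_div, norm_sub_rev]

theorem pseudoDistD_diskMobius {a z w : ℂ} (ha : ‖a‖ < 1) (hz : ‖z‖ < 1) (hw : ‖w‖ < 1) :
    pseudoDistD (diskMobius a z) (diskMobius a w) = pseudoDistD z w := by
  have hA := one_sub_conj_mul_ne_zero hz ha
  have hB := one_sub_conj_mul_ne_zero hw ha
  have hB' : conj (1 - conj a * w) ≠ 0 := (map_ne_zero _).mpr hB
  have ha' := one_sub_conj_mul_ne_zero ha ha
  have hnum : diskMobius a z - diskMobius a w =
      (1 - conj a * a) * (w - z) / ((1 - conj a * z) * (1 - conj a * w)) := by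
    rw [diskMobius, diskMobius, div_sub_div _ _ hA hB]
    ring
  have hden : 1 - conj (diskMobius a w) * diskMobius a z =
      (1 - conj a * a) * (1 - conj w * z) / (conj (1 - conj a * w) * (1 - conj a * z)) := by
    rw [diskMobius, diskMobius, map_div₀, div_mul_div_comm, one_sub_div (mul_ne_zero hB' hA)]
    simp only [map_sub, map_mul, map_one, conj_conj]
    ring
  rw [pseudoDistD, pseudoDistD, hnum, hden, norm_div, norm_div, norm_mul, norm_mul, norm_mul,
    norm_mul, norm_conj, norm_sub_rev w z]
  field_simp

theorem pseudoDistD_strong_triangle (z w a : ℂ)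
    (hz : ‖z‖ < 1) (hw : ‖w‖ < 1) (ha : ‖a‖ < 1) :
    pseudoDistD z w ≤
      (pseudoDistD z a + pseudoDistD a w) / (1 + pseudoDistD z a * pseudoDistD a w) := by
  have hz' : ‖diskMobius a z‖ < 1 := norm_diskMobius a z ▸ pseudoDistD_lt_one hz ha
  have hw' : ‖diskMobius a w‖ < 1 := norm_diskMobius a w ▸ pseudoDistD_lt_one hw ha
  rw [← pseudoDistD_diskMobius ha hz hw, pseudoDistD_comm a w, ← norm_diskMobius a z,
    ← norm_diskMobius a w]
  exact pseudoDistD_le_add_div_one_add_mul hz' hw'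
end
end

section
/- For 0 < r < 1 and 0 < s < 1 with s > r, the pseudo-hyperbolic ball Δ(a,r) intersects 𝔹 \ 𝔹_s (i.e., meets the set {|z| ≥ s}) if and only if |a| > (s - r)/(1 - s r). -/
open MeasureTheory
open scoped ComplexConjugate ENNReal

noncomputable section
open scoped Classical

/-! From `1 - ρ(a,w)² = (1 - |a|²)(1 - |w|²) / |1 - ⟨w,a⟩|²` and `|1 - ⟨w,a⟩| ≥ 1 - |a||w|` one gets
`ρ(a,w) ≥ (|w| - |a|) / (1 - |a||w|)`, which increases with `|w|`. So on `{|w| ≥ s}` the distance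
is at least `(s - |a|) / (1 - |a|s)`, a bound attained at `(s/|a|) a` when `|a| < s`, while
`ρ(a,a) = 0` covers `|a| ≥ s`; and `(s - |a|) / (1 - |a|s) < r ↔ (s - r) / (1 - sr) < |a|`. -/

section Projection

variable {n : ℕ} {a : EuclideanSpace ℂ (Fin n)}

lemma Pz_of_ne_zero (ha : a ≠ 0) (w : EuclideanSpace ℂ (Fin n)) :
    Pz a w = ((inner ℂ a w : ℂ) / (‖a‖ : ℂ) ^ 2) • a :=
  if_neg ha

lemma Pz_add_Qz (a w : EuclideanSpace ℂ (Fin n)) : Pz a w + Qz a w = w :=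
  add_sub_cancel _ _

lemma inner_Pz (ha : a ≠ 0) (w : EuclideanSpace ℂ (Fin n)) :
    inner ℂ a (Pz a w) = inner ℂ a w := by
  have : (‖a‖ : ℂ) ≠ 0 := by exact_mod_cast norm_ne_zero_iff.mpr ha
  rw [Pz_of_ne_zero ha, inner_smul_right, inner_self_eq_norm_sq_to_K]
  field_simp
  rfl

lemma inner_Qz (a w : EuclideanSpace ℂ (Fin n)) : inner ℂ a (Qz a w) = 0 := by
  by_cases ha : a = 0
  · simp [ha]
  · rw [Qz, inner_sub_right, inner_Pz ha, sub_self]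

lemma inner_Pz_Qz (a w : EuclideanSpace ℂ (Fin n)) : inner ℂ (Pz a w) (Qz a w) = 0 := by
  by_cases ha : a = 0
  · simp [Pz, ha]
  · rw [Pz_of_ne_zero ha, inner_smul_left, inner_Qz, mul_zero]

lemma norm_Pz_mul_norm (a w : EuclideanSpace ℂ (Fin n)) :
    ‖Pz a w‖ * ‖a‖ = ‖(inner ℂ a w : ℂ)‖ := by
  by_cases ha : a = 0
  · simp [Pz, ha]
  · have : ‖a‖ ≠ 0 := norm_ne_zero_iff.mpr ha
    rw [Pz_of_ne_zero ha, norm_smul, norm_div, norm_pow, Complex.norm_real, norm_norm]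
    field_simp

end Projection

section PseudoDist

variable {n : ℕ} {a w : EuclideanSpace ℂ (Fin n)}

lemma norm_sq_moebius_numerator (ha : ‖a‖ ≤ 1) (w : EuclideanSpace ℂ (Fin n)) :
    ‖a - Pz a w - Real.sqrt (1 - ‖a‖ ^ 2) • Qz a w‖ ^ 2
      = ‖1 - (inner ℂ a w : ℂ)‖ ^ 2 - (1 - ‖a‖ ^ 2) * (1 - ‖w‖ ^ 2) := by
  set α : ℂ := inner ℂ a w
  have hc : Real.sqrt (1 - ‖a‖ ^ 2) ^ 2 = 1 - ‖a‖ ^ 2 := Real.sq_sqrt (by nlinarith [norm_nonneg a])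
  have hPQ := inner_Pz_Qz a w
  have horth : inner ℂ (a - Pz a w) (Real.sqrt (1 - ‖a‖ ^ 2) • Qz a w) = 0 := by
    rw [RCLike.real_smul_eq_coe_smul (K := ℂ), inner_smul_right, inner_sub_left, inner_Qz, hPQ,
      sub_zero, mul_zero]
  have hw : ‖w‖ ^ 2 = ‖Pz a w‖ ^ 2 + ‖Qz a w‖ ^ 2 := by
    simpa only [Pz_add_Qz, ← sq] using norm_add_sq_eq_norm_sq_add_norm_sq_of_inner_eq_zero _ _ hPQ
  have haP : ‖a - Pz a w‖ ^ 2 = ‖a‖ ^ 2 - 2 * α.re + ‖Pz a w‖ ^ 2 := by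
    by_cases ha0 : a = 0
    · simp [ha0, α, Pz]
    · rw [@norm_sub_sq ℂ, inner_Pz ha0]; rfl
  have hα : ‖1 - α‖ ^ 2 = 1 - 2 * α.re + ‖α‖ ^ 2 := by
    rw [@norm_sub_sq ℂ]; simp
  rw [@norm_sub_sq ℂ, horth, norm_smul, Real.norm_of_nonneg (Real.sqrt_nonneg _), mul_pow, hc,
    haP, hα, ← norm_Pz_mul_norm]
  simp only [map_zero, mul_zero, sub_zero]
  linear_combination (‖a‖ ^ 2 - 1) * hw

lemma one_sub_pseudoDist_sq_mul (ha : ‖a‖ ≤ 1) (hD : (1 : ℂ) - inner ℂ a w ≠ 0) :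
    (1 - pseudoDist a w ^ 2) * ‖1 - (inner ℂ a w : ℂ)‖ ^ 2 = (1 - ‖a‖ ^ 2) * (1 - ‖w‖ ^ 2) := by
  have hD' : ‖1 - (inner ℂ a w : ℂ)‖ ^ 2 ≠ 0 := pow_ne_zero 2 (norm_ne_zero_iff.mpr hD)
  rw [pseudoDist, moebius, norm_smul, mul_pow, norm_sq_moebius_numerator ha, norm_inv, inv_pow]
  field_simp
  ring

lemma norm_sub_norm_le_pseudoDist_mul (ha : ‖a‖ < 1) (hw : ‖w‖ < 1) :
    ‖w‖ - ‖a‖ ≤ pseudoDist a w * (1 - ‖a‖ * ‖w‖) := by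
  have hxy : 0 < 1 - ‖a‖ * ‖w‖ := by nlinarith [norm_nonneg a, norm_nonneg w]
  have hD : 1 - ‖a‖ * ‖w‖ ≤ ‖1 - (inner ℂ a w : ℂ)‖ := by
    have := norm_inner_le_norm (𝕜 := ℂ) a w
    have := norm_sub_norm_le (1 : ℂ) (inner ℂ a w)
    rw [norm_one] at this
    linarith
  have hD0 : (1 : ℂ) - inner ℂ a w ≠ 0 := norm_pos_iff.mp (hxy.trans_le hD)
  have hident := one_sub_pseudoDist_sq_mul ha.le hD0
  have hprod : 0 < (1 - ‖a‖ ^ 2) * (1 - ‖w‖ ^ 2) := by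
    apply mul_pos <;> nlinarith [norm_nonneg a, norm_nonneg w]
  have hρ : 0 ≤ 1 - pseudoDist a w ^ 2 := by
    by_contra! h
    nlinarith [sq_nonneg ‖1 - (inner ℂ a w : ℂ)‖]
  have hD2 : (1 - ‖a‖ * ‖w‖) ^ 2 ≤ ‖1 - (inner ℂ a w : ℂ)‖ ^ 2 := pow_le_pow_left₀ hxy.le hD 2
  refine le_of_sq_le_sq ?_ (mul_nonneg (norm_nonneg _) hxy.le)
  -- `(1 - xy)² - (y - x)² = (1 - x²)(1 - y²)`
  nlinarith [mul_le_mul_of_nonneg_left hD2 hρ]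

lemma div_le_pseudoDist_of_le_norm {s : ℝ} (ha : ‖a‖ < 1) (hsw : s ≤ ‖w‖) (hw : ‖w‖ < 1) :
    (s - ‖a‖) / (1 - ‖a‖ * s) ≤ pseudoDist a w := by
  have hxs : 0 < 1 - ‖a‖ * s := by nlinarith [norm_nonneg a]
  have hxy : 0 < 1 - ‖a‖ * ‖w‖ := by nlinarith [norm_nonneg a]
  have hlow := norm_sub_norm_le_pseudoDist_mul ha hw
  rw [div_le_iff₀ hxs]
  have hmono : (s - ‖a‖) * (1 - ‖a‖ * ‖w‖) ≤ (‖w‖ - ‖a‖) * (1 - ‖a‖ * s) := by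
    nlinarith [mul_nonneg (sub_nonneg.mpr hsw) (by nlinarith [norm_nonneg a] : 0 ≤ 1 - ‖a‖ ^ 2)]
  nlinarith [mul_le_mul_of_nonneg_right hlow hxs.le]

lemma pseudoDist_ofReal_smul (a : EuclideanSpace ℂ (Fin n)) (c : ℝ) :
    pseudoDist a ((c : ℂ) • a) = |1 - c| * ‖a‖ / |1 - c * ‖a‖ ^ 2| := by
  by_cases ha : a = 0
  · simp [ha, pseudoDist, moebius, Pz, Qz]
  have hin : inner ℂ a ((c : ℂ) • a) = ((c * ‖a‖ ^ 2 : ℝ) : ℂ) := by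
    rw [inner_smul_right, inner_self_eq_norm_sq_to_K]
    push_cast; rfl
  have hP : Pz a ((c : ℂ) • a) = (c : ℂ) • a := by
    rw [Pz_of_ne_zero ha, hin]
    congr 1
    have : (‖a‖ : ℂ) ≠ 0 := by exact_mod_cast norm_ne_zero_iff.mpr ha
    push_cast
    field_simp
  have hsub : a - (c : ℂ) • a = ((1 - c : ℝ) : ℂ) • a := by
    rw [Complex.ofReal_sub, Complex.ofReal_one, sub_smul, one_smul]
  rw [pseudoDist, moebius, hin, hP, Qz, hP, sub_self, smul_zero, sub_zero, hsub, norm_smul,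
    norm_smul, norm_inv, ← Complex.ofReal_one, ← Complex.ofReal_sub, Complex.norm_real,
    Complex.norm_real, Real.norm_eq_abs, Real.norm_eq_abs]
  ring

lemma pseudoDist_self (a : EuclideanSpace ℂ (Fin n)) : pseudoDist a a = 0 := by
  simpa using pseudoDist_ofReal_smul a 1

lemma exists_norm_eq_pseudoDist_eq {t : ℝ} (ha : a ≠ 0) (hat : ‖a‖ ≤ t) (ht : t < 1) :
    ∃ w : EuclideanSpace ℂ (Fin n), ‖w‖ = t ∧ pseudoDist a w = (t - ‖a‖) / (1 - ‖a‖ * t) := by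
  have ha0 : 0 < ‖a‖ := norm_pos_iff.mpr ha
  refine ⟨((t / ‖a‖ : ℝ) : ℂ) • a, ?_, ?_⟩
  · rw [norm_smul, Complex.norm_real, Real.norm_of_nonneg (div_nonneg (ha0.le.trans hat) ha0.le),
      div_mul_cancel₀ _ ha0.ne']
  · have h1 : |1 - t / ‖a‖| * ‖a‖ = t - ‖a‖ := by
      rw [abs_of_nonpos (by rw [sub_nonpos, one_le_div ha0]; exact hat)]
      field_simp
      ring
    have h2 : |1 - t / ‖a‖ * ‖a‖ ^ 2| = 1 - ‖a‖ * t := by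
      rw [abs_of_nonneg (by field_simp; nlinarith)]
      field_simp
    rw [pseudoDist_ofReal_smul, h1, h2]

end PseudoDist

theorem pseudoBall_meets_annulus_iff_general {n : ℕ} (a : EuclideanSpace ℂ (Fin n))
    (ha : ‖a‖ < 1) (r s : ℝ) (hr0 : 0 < r) (hs1 : s < 1) (hrs : r < s) :
    ({w : EuclideanSpace ℂ (Fin n) | ‖w‖ < 1 ∧ pseudoDist a w < r} ∩
        {z : EuclideanSpace ℂ (Fin n) | s ≤ ‖z‖}).Nonempty ↔
      (s - r) / (1 - s * r) < ‖a‖ := by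
  have hsr : 0 < 1 - s * r := by nlinarith
  have has1 : 0 < 1 - ‖a‖ * s := by nlinarith [norm_nonneg a]
  have hcrit : (s - r) / (1 - s * r) < ‖a‖ ↔ (s - ‖a‖) / (1 - ‖a‖ * s) < r := by
    rw [div_lt_iff₀ hsr, div_lt_iff₀ has1]
    constructor <;> intro <;> linarith
  rw [hcrit]
  constructor
  · rintro ⟨w, ⟨hw1, hwr⟩, hws⟩
    exact (div_le_pseudoDist_of_le_norm ha hws hw1).trans_lt hwr
  · intro h
    rcases le_or_gt s ‖a‖ with hsa | hsa
    · exact ⟨a, ⟨ha, by rwa [pseudoDist_self]⟩, hsa⟩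
    · have ha0 : a ≠ 0 := by
        rintro rfl
        simp only [norm_zero, sub_zero, zero_mul, div_one] at h
        linarith
      obtain ⟨w, hw, hwa⟩ := exists_norm_eq_pseudoDist_eq ha0 hsa.le hs1
      exact ⟨w, ⟨hw ▸ hs1, hwa ▸ h⟩, hw.ge⟩

theorem pseudoBall_meets_annulus_iff {n : ℕ} (a : EuclideanSpace ℂ (Fin n))
    (ha : ‖a‖ < 1) (r s : ℝ) (hr0 : 0 < r) (hr1 : r < 1) (hs1 : s < 1) (hrs : r < s) :
    ({w : EuclideanSpace ℂ (Fin n) | ‖w‖ < 1 ∧ pseudoDist a w < r} ∩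
        {z : EuclideanSpace ℂ (Fin n) | s ≤ ‖z‖}).Nonempty ↔
      (s - r) / (1 - s * r) < ‖a‖ :=
  pseudoBall_meets_annulus_iff_general a ha r s hr0 hs1 hrs
end
end

section
/- (Khinchine's inequality) For every 0 < p < ∞ there exist constants 0 < A_p ≤ B_p < ∞ such that for all m ∈ ℕ and complex numbers c₁,…,c_m: A_p (Σ |c_j|²)^{p/2} ≤ ∫₀¹ |Σ c_j r_j(t)|^p dt ≤ B_p (Σ |c_j|²)^{p/2}, where r_j(t) = sgn(sin(2^j π t)) are the Rademacher functions. -/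
/-!
On the dyadic intervals of length `2⁻ᵐ` the functions `r_1, …, r_m` are constant and run through
all sign patterns, so the integral is the average of `‖∑ c_j ε_j‖^p` over `ε ∈ {±1}ᵐ`.
For real coefficients, `𝔼 exp (∑ a_j ε_j) = ∏ cosh a_j ≤ exp (∑ a_j² / 2)` bounds every even
moment `𝔼 S^(2k)` by a constant times `(∑ a_j²)^k`; complex coefficients are split into real and
imaginary parts. As `𝔼 ‖S‖² = ∑ ‖c_j‖²` exactly, the upper bound follows from Lyapunov's
inequality for `p ≤ 2k`. The lower bound is Lyapunov again for `p ≥ 2`, and for `p < 2` the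
Cauchy–Schwarz inequality `(𝔼 ‖S‖²)² ≤ 𝔼 ‖S‖^p · 𝔼 ‖S‖^(4-p)` together with the upper bound for
the exponent `4 - p`.
-/

open scoped Real

noncomputable section

/-- The Rademacher function `r_m(t) = sgn (sin (2^m π t))`. -/
def rademacher (m : ℕ) (t : ℝ) : ℝ := Real.sign (Real.sin (2 ^ m * π * t))

open MeasureTheory Set Finset
open scoped BigOperators Nat

lemma Real.sign_sin_pi_mul_of_mem_Ioo {K : ℕ} {x : ℝ} (hx : x ∈ Ioo (K : ℝ) (K + 1)) :
    Real.sign (Real.sin (π * x)) = (-1) ^ K := by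
  have hsin : Real.sin (π * x) = (-1) ^ K * Real.sin (π * (x - K)) := by
    rw [← Real.sin_add_nat_mul_pi]; ring_nf
  have hpos : 0 < Real.sin (π * (x - K)) :=
    Real.sin_pos_of_pos_of_lt_pi (by nlinarith [hx.1, Real.pi_pos])
      (by nlinarith [hx.2, Real.pi_pos])
  rcases neg_one_pow_eq_or ℝ K with h | h <;>
    simp [hsin, h, Real.sign_of_pos, Real.sign_of_neg, hpos]

lemma rademacher_eq_of_mem_Ioo {n j i : ℕ} (hj : j ≤ n) {t : ℝ}
    (ht : t ∈ Ioo ((i : ℝ) / 2 ^ n) ((i + 1) / 2 ^ n)) :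
    rademacher j t = (-1) ^ (i / 2 ^ (n - j)) := by
  set b := 2 ^ (n - j)
  have hb : (2 : ℝ) ^ n = 2 ^ j * b := by simp [b, ← pow_add, Nat.add_sub_cancel' hj]
  have hlow : ((i / b * b : ℕ) : ℝ) ≤ i := by exact_mod_cast Nat.div_mul_le_self i b
  have hhigh : (i + 1 : ℝ) ≤ ((b * (i / b + 1) : ℕ) : ℝ) := by
    exact_mod_cast Nat.lt_mul_div_succ i (by positivity : 0 < b)
  obtain ⟨h1, h2⟩ := ht
  rw [div_lt_iff₀ (by positivity), hb] at h1
  rw [lt_div_iff₀ (by positivity), hb] at h2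
  push_cast at hlow hhigh
  have hb0 : (0 : ℝ) < b := by positivity
  -- `2 ^ n * t = b * (2 ^ j * t)` lies in `(i, i + 1)`, so `2 ^ j * t` lies in `(i / b, i / b + 1)`.
  unfold rademacher
  rw [show 2 ^ j * π * t = π * (2 ^ j * t) by ring]
  refine Real.sign_sin_pi_mul_of_mem_Ioo ⟨?_, ?_⟩ <;> nlinarith

section ConstOnIoo

variable {E : Type*} [NormedAddCommGroup E] {f : ℝ → E} {a b : ℝ} {c : E}

lemma intervalIntegrable_of_eqOn_Ioo (hab : a ≤ b) (h : EqOn f (fun _ => c) (Ioo a b)) :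
    IntervalIntegrable f volume a b := by
  rw [intervalIntegrable_iff_integrableOn_Ioo_of_le hab]
  exact (integrableOn_const measure_Ioo_lt_top.ne).congr_fun h.symm measurableSet_Ioo

lemma intervalIntegral_eq_of_eqOn_Ioo [NormedSpace ℝ E] [CompleteSpace E] (hab : a ≤ b)
    (h : EqOn f (fun _ => c) (Ioo a b)) : ∫ x in a..b, f x = (b - a) • c := by
  rw [intervalIntegral.integral_of_le hab, integral_Ioc_eq_integral_Ioo,
    setIntegral_congr_fun measurableSet_Ioo h, setIntegral_const, Real.volume_real_Ioo_of_le hab]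

end ConstOnIoo

lemma integral_comp_rademacher_eq_sum (m : ℕ) (F : (Fin m → ℝ) → ℝ) :
    ∫ t in (0 : ℝ)..1, F (fun j => rademacher (j.1 + 1) t) =
      ∑ i ∈ range (2 ^ m), F (fun j => (-1) ^ (i / 2 ^ (m - 1 - j.1))) / 2 ^ m := by
  set a : ℕ → ℝ := fun i => i / 2 ^ m
  have ha : ∀ i, a i ≤ a (i + 1) := fun i => by simp only [a]; gcongr; simp
  have hconst : ∀ i, EqOn (fun t => F (fun j => rademacher (j.1 + 1) t))
      (fun _ => F (fun j => (-1) ^ (i / 2 ^ (m - 1 - j.1)))) (Ioo (a i) (a (i + 1))) := by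
    intro i t ht
    simp only [a, Nat.cast_succ] at ht
    refine congrArg F (funext fun j => ?_)
    rw [rademacher_eq_of_mem_Ioo j.2 ht, Nat.sub_sub, add_comm 1]
  have h0 : a 0 = 0 := by simp [a]
  have h1 : a (2 ^ m) = 1 := by simp [a]
  have hsum := intervalIntegral.sum_integral_adjacent_intervals
    fun i (_ : i < 2 ^ m) => intervalIntegrable_of_eqOn_Ioo (ha i) (hconst i)
  rw [h0, h1] at hsum
  rw [← hsum]
  refine sum_congr rfl fun i _ => ?_
  have hlength : a (i + 1) - a i = (2 ^ m)⁻¹ := by simp only [a]; push_cast; ring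
  rw [intervalIntegral_eq_of_eqOn_Ioo (ha i) (hconst i), hlength, smul_eq_mul, inv_mul_eq_div]

def signOfBit (b : Fin 2) : ℝ := (-1) ^ (b : ℕ)

lemma sum_range_two_pow_div_eq_expect (m : ℕ) (F : (Fin m → ℝ) → ℝ) :
    ∑ i ∈ range (2 ^ m), F (fun j => (-1) ^ (i / 2 ^ (m - 1 - j.1))) / 2 ^ m =
      𝔼 g : Fin m → Fin 2, F (fun j => signOfBit (g j)) := by
  -- `e i` lists the binary digits of `i`, most significant first.
  let e : Fin (2 ^ m) ≃ (Fin m → Fin 2) :=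
    finFunctionFinEquiv.symm.trans (Equiv.arrowCongr Fin.revPerm (Equiv.refl _))
  have hdigit : ∀ (i : Fin (2 ^ m)) (j : Fin m),
      (-1 : ℝ) ^ (i.1 / 2 ^ (m - 1 - j.1)) = signOfBit (e i j) := by
    intro i j
    simp only [e, signOfBit, Equiv.trans_apply, Equiv.arrowCongr_apply, Fin.revPerm_symm,
      Function.comp_apply, Fin.revPerm_apply, Equiv.refl_apply, finFunctionFinEquiv_symm_apply_val,
      Fin.val_rev]
    rw [neg_one_pow_eq_pow_mod_two (i.1 / _), Nat.sub_sub, add_comm 1]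
  rw [Fintype.expect_eq_sum_div_card, Fintype.card_fun, Fintype.card_fin, Fintype.card_fin,
    ← sum_div, ← Fin.sum_univ_eq_sum_range (fun i => F (fun j => (-1) ^ (i / 2 ^ (m - 1 - j.1))))]
  push_cast
  congr 1
  exact Fintype.sum_equiv e _ _ fun i => congrArg F (funext (hdigit i))

lemma integral_comp_rademacher_eq_expect (m : ℕ) (F : (Fin m → ℝ) → ℝ) :
    ∫ t in (0 : ℝ)..1, F (fun j => rademacher (j.1 + 1) t) =
      𝔼 g : Fin m → Fin 2, F (fun j => signOfBit (g j)) :=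
  (integral_comp_rademacher_eq_sum m F).trans (sum_range_two_pow_div_eq_expect m F)

def signSum {m : ℕ} (a : Fin m → ℝ) (g : Fin m → Fin 2) : ℝ := ∑ j, a j * signOfBit (g j)

lemma expect_fin_succ_cons {α : Type*} [Fintype α] {n : ℕ} (H : (Fin (n + 1) → α) → ℝ) :
    𝔼 g, H g = 𝔼 g : Fin n → α, 𝔼 x, H (Fin.cons x g) := by
  rw [Fintype.expect_equiv (Fin.consEquiv _).symm _ (fun x => H (Fin.cons x.1 x.2))
      (fun g => by simp), ← univ_product_univ, expect_product, expect_comm]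

lemma expect_signSum_succ {n : ℕ} (a : Fin (n + 1) → ℝ) (H : ℝ → ℝ) :
    𝔼 g, H (signSum a g) = 𝔼 g, (H (signSum (Fin.tail a) g + a 0) +
      H (signSum (Fin.tail a) g - a 0)) / 2 := by
  rw [expect_fin_succ_cons]
  simp [Fintype.expect_eq_sum_div_card, signSum, Fin.sum_univ_succ, signOfBit,
    Fin.tail, add_comm, sub_eq_add_neg]

lemma expect_signSum_sq {m : ℕ} (a : Fin m → ℝ) : 𝔼 g, signSum a g ^ 2 = ∑ j, a j ^ 2 := by
  induction m with
  | zero => simp [signSum]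
  | succ n ih =>
    rw [expect_signSum_succ a (· ^ 2)]
    calc _ = 𝔼 g, (signSum (Fin.tail a) g ^ 2 + a 0 ^ 2) := by
          congr 1; ext g; ring
      _ = ∑ j, Fin.tail a j ^ 2 + a 0 ^ 2 := by rw [expect_add_distrib, Fintype.expect_const, ih]
      _ = _ := by rw [Fin.sum_univ_succ, add_comm]; rfl

lemma expect_exp_signSum_le {m : ℕ} (a : Fin m → ℝ) :
    𝔼 g, Real.exp (signSum a g) ≤ Real.exp ((∑ j, a j ^ 2) / 2) := by
  induction m with
  | zero => simp [signSum]
  | succ n ih =>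
    have hcosh : ∀ y, (Real.exp (y + a 0) + Real.exp (y - a 0)) / 2 =
        Real.cosh (a 0) * Real.exp y := fun y => by
      rw [Real.cosh_eq, Real.exp_add, Real.exp_sub, Real.exp_neg]; field_simp
    rw [expect_signSum_succ a Real.exp]
    simp_rw [hcosh]
    rw [← mul_expect, Fin.sum_univ_succ, add_div, Real.exp_add]
    exact mul_le_mul (Real.cosh_le_exp_half_sq _) (ih _)
      (expect_nonneg fun _ _ => (Real.exp_pos _).le) (Real.exp_pos _).le

lemma abs_pow_le_factorial_mul_exp_add_exp_neg (x : ℝ) (n : ℕ) :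
    |x| ^ n ≤ n ! * (Real.exp x + Real.exp (-x)) := by
  have h := Real.pow_div_factorial_le_exp (x := |x|) (abs_nonneg x) n
  rw [div_le_iff₀ (by positivity)] at h
  calc |x| ^ n ≤ Real.exp |x| * n ! := h
    _ ≤ (Real.exp x + Real.exp (-x)) * n ! := by gcongr; exact Real.exp_abs_le x
    _ = _ := mul_comm _ _

lemma signSum_smul {m : ℕ} (c : ℝ) (a : Fin m → ℝ) (g : Fin m → Fin 2) :
    signSum (c • a) g = c * signSum a g := by
  simp [signSum, mul_sum, mul_assoc]

lemma signSum_neg {m : ℕ} (a : Fin m → ℝ) (g : Fin m → Fin 2) :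
    signSum (-a) g = -signSum a g := by
  simp [signSum]

lemma expect_abs_signSum_pow_le {m : ℕ} {a : Fin m → ℝ} (ha : ∑ j, a j ^ 2 = 1) (n : ℕ) :
    𝔼 g, |signSum a g| ^ n ≤ 2 * Real.exp (1 / 2) * n ! := by
  calc 𝔼 g, |signSum a g| ^ n
      ≤ 𝔼 g, n ! * (Real.exp (signSum a g) + Real.exp (signSum (-a) g)) :=
        expect_le_expect fun g _ => by
          rw [signSum_neg]; exact abs_pow_le_factorial_mul_exp_add_exp_neg _ n
    _ = n ! * (𝔼 g, Real.exp (signSum a g) + 𝔼 g, Real.exp (signSum (-a) g)) := by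
        rw [← mul_expect, expect_add_distrib]
    _ ≤ n ! * (Real.exp (1 / 2) + Real.exp (1 / 2)) := by
        gcongr
        · exact (expect_exp_signSum_le a).trans_eq (by rw [ha])
        · exact (expect_exp_signSum_le (-a)).trans_eq (by simp [ha])
    _ = _ := by ring

lemma expect_signSum_pow_le {m : ℕ} (a : Fin m → ℝ) (k : ℕ) :
    𝔼 g, signSum a g ^ (2 * k) ≤ 2 * Real.exp (1 / 2) * (2 * k)! * (∑ j, a j ^ 2) ^ k := by
  set V := ∑ j, a j ^ 2
  have hV0 : 0 ≤ V := sum_nonneg fun j _ => sq_nonneg (a j)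
  rcases hV0.eq_or_lt with hV | hV
  · have ha : a = 0 := funext fun j => by
      simpa using (sum_eq_zero_iff_of_nonneg fun i _ => sq_nonneg (a i)).1 hV.symm j (mem_univ j)
    rcases k.eq_zero_or_pos with rfl | hk
    · simp only [mul_zero, pow_zero, Fintype.expect_const, Nat.factorial_zero, Nat.cast_one,
        mul_one]
      linarith [Real.add_one_le_exp (1 / 2 : ℝ)]
    · simp [← hV, ha, signSum, hk.ne']
  set c := (Real.sqrt V)⁻¹
  have hc : c ^ 2 * V = 1 := by rw [inv_pow, Real.sq_sqrt hV0, inv_mul_cancel₀ hV.ne']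
  have hnorm : ∑ j, (c • a) j ^ 2 = 1 := by simp [mul_pow, ← mul_sum, hc, V]
  have hscale : ∀ g, signSum a g ^ (2 * k) = V ^ k * |signSum (c • a) g| ^ (2 * k) := fun g => by
    rw [signSum_smul, (even_two_mul k).pow_abs, mul_pow, ← mul_assoc, pow_mul c, ← mul_pow,
      mul_comm V, hc, one_pow, one_mul]
  simp_rw [hscale, ← mul_expect]
  calc V ^ k * 𝔼 g, |signSum (c • a) g| ^ (2 * k)
      ≤ V ^ k * (2 * Real.exp (1 / 2) * (2 * k)!) := by
        gcongr; exact_mod_cast expect_abs_signSum_pow_le hnorm (2 * k)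
    _ = _ := by ring

section Complex

variable {m : ℕ} (c : Fin m → ℂ)

lemma norm_sum_mul_signOfBit_sq (g : Fin m → Fin 2) :
    ‖∑ j, c j * (signOfBit (g j) : ℂ)‖ ^ 2 =
      signSum (fun j => (c j).re) g ^ 2 + signSum (fun j => (c j).im) g ^ 2 := by
  rw [Complex.sq_norm, Complex.normSq_apply, Complex.re_sum, Complex.im_sum]
  simp only [Complex.re_mul_ofReal, Complex.im_mul_ofReal, signSum, sq]

lemma sum_norm_sq_eq_add :
    ∑ j, ‖c j‖ ^ 2 = ∑ j, (c j).re ^ 2 + ∑ j, (c j).im ^ 2 := by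
  rw [← sum_add_distrib]
  refine sum_congr rfl fun j _ => ?_
  rw [Complex.sq_norm, Complex.normSq_apply, sq, sq]

lemma expect_norm_sum_mul_signOfBit_sq :
    𝔼 g : Fin m → Fin 2, ‖∑ j, c j * (signOfBit (g j) : ℂ)‖ ^ 2 = ∑ j, ‖c j‖ ^ 2 := by
  simp_rw [norm_sum_mul_signOfBit_sq, expect_add_distrib, expect_signSum_sq, sum_norm_sq_eq_add]

lemma expect_norm_sum_mul_signOfBit_pow_le (k : ℕ) :
    𝔼 g : Fin m → Fin 2, ‖∑ j, c j * (signOfBit (g j) : ℂ)‖ ^ (2 * k) ≤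
      2 ^ (k + 1) * (2 * Real.exp (1 / 2) * (2 * k)!) * (∑ j, ‖c j‖ ^ 2) ^ k := by
  set M := 2 * Real.exp (1 / 2) * (2 * k)!
  set X := signSum (fun j => (c j).re)
  set Y := signSum (fun j => (c j).im)
  have hre : ∑ j, (c j).re ^ 2 ≤ ∑ j, ‖c j‖ ^ 2 := by
    rw [sum_norm_sq_eq_add]; exact le_add_of_nonneg_right (sum_nonneg fun j _ => sq_nonneg _)
  have him : ∑ j, (c j).im ^ 2 ≤ ∑ j, ‖c j‖ ^ 2 := by
    rw [sum_norm_sq_eq_add]; exact le_add_of_nonneg_left (sum_nonneg fun j _ => sq_nonneg _)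
  have hconvex : ∀ g, (X g ^ 2 + Y g ^ 2) ^ k ≤ 2 ^ k * (X g ^ (2 * k) + Y g ^ (2 * k)) :=
    fun g => by
      rw [pow_mul, pow_mul]
      refine (add_pow_le (sq_nonneg _) (sq_nonneg _) k).trans ?_
      gcongr
      exacts [one_le_two, k.sub_le 1]
  calc 𝔼 g : Fin m → Fin 2, ‖∑ j, c j * (signOfBit (g j) : ℂ)‖ ^ (2 * k)
      = 𝔼 g, (X g ^ 2 + Y g ^ 2) ^ k := by simp_rw [pow_mul, norm_sum_mul_signOfBit_sq]; rfl
    _ ≤ 2 ^ k * (𝔼 g, X g ^ (2 * k) + 𝔼 g, Y g ^ (2 * k)) := by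
        rw [← expect_add_distrib, mul_expect]; exact expect_le_expect fun g _ => hconvex g
    _ ≤ 2 ^ k * (M * (∑ j, (c j).re ^ 2) ^ k + M * (∑ j, (c j).im ^ 2) ^ k) := by
        gcongr <;> apply expect_signSum_pow_le
    _ ≤ 2 ^ k * (M * (∑ j, ‖c j‖ ^ 2) ^ k + M * (∑ j, ‖c j‖ ^ 2) ^ k) := by
        have : 0 ≤ M := by positivity
        gcongr
    _ = _ := by ring

end Complex

section MomentComparison

variable {ι : Type*} [Fintype ι] {f : ι → ℝ}

lemma expect_rpow_le_expect_rpow_rpow [Nonempty ι] (hf : 0 ≤ f) {p q : ℝ} (hp : 0 < p)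
    (hpq : p ≤ q) :
    𝔼 i, f i ^ p ≤ (𝔼 i, f i ^ q) ^ (p / q) := by
  have h := Real.compact_inner_le_weight_mul_Lp_of_nonneg univ ((one_le_div hp).2 hpq)
    (w := 1) (f := fun i => f i ^ p) (fun _ => zero_le_one) (fun i => Real.rpow_nonneg (hf i) p)
  have hq : p * (q / p) = q := mul_div_cancel₀ q hp.ne'
  simpa only [Pi.one_apply, one_mul, Fintype.expect_const, Real.one_rpow, inv_div,
    ← Real.rpow_mul (hf _), hq] using h

lemma rpow_expect_sq_le_expect_rpow [Nonempty ι] (hf : 0 ≤ f) {p : ℝ} (hp : 2 ≤ p) :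
    (𝔼 i, f i ^ 2) ^ (p / 2) ≤ 𝔼 i, f i ^ p := by
  have h := expect_rpow_le_expect_rpow_rpow hf two_pos hp
  have hI : 0 ≤ 𝔼 i, f i ^ p := expect_nonneg fun i _ => Real.rpow_nonneg (hf i) p
  simp only [Real.rpow_two] at h
  calc (𝔼 i, f i ^ 2) ^ (p / 2) ≤ ((𝔼 i, f i ^ p) ^ (2 / p)) ^ (p / 2) := by gcongr
    _ = 𝔼 i, f i ^ p := by
      rw [← Real.rpow_mul hI, div_mul_div_comm, mul_comm 2 p, div_self (by positivity),
        Real.rpow_one]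

lemma sq_expect_sq_le_expect_rpow_mul_expect_rpow (hf : 0 ≤ f) (p : ℝ) :
    (𝔼 i, f i ^ 2) ^ 2 ≤ (𝔼 i, f i ^ p) * 𝔼 i, f i ^ (4 - p) := by
  have hsplit : ∀ i, f i ^ 2 = f i ^ (p / 2) * f i ^ (2 - p / 2) := fun i => by
    rw [← Real.rpow_add' (hf i) (by norm_num), add_sub_cancel, Real.rpow_two]
  have hsq : ∀ r : ℝ, ∀ i, (f i ^ (r / 2)) ^ 2 = f i ^ r := fun r i => by
    rw [← Real.rpow_mul_natCast (hf i), Nat.cast_two, div_mul_cancel₀ r two_ne_zero]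
  simp_rw [hsplit]
  calc (𝔼 i, f i ^ (p / 2) * f i ^ (2 - p / 2)) ^ 2
      ≤ (𝔼 i, (f i ^ (p / 2)) ^ 2) * 𝔼 i, (f i ^ (2 - p / 2)) ^ 2 :=
        expect_mul_sq_le_sq_mul_sq _ _ _
    _ = _ := by simp_rw [hsq p, show 2 - p / 2 = (4 - p) / 2 by ring, hsq]

lemma expect_rpow_le_of_expect_pow_le [Nonempty ι] (hf : 0 ≤ f) {p C : ℝ} {k : ℕ} (hp : 0 < p)
    (hpk : p ≤ 2 * k) (hC : 0 ≤ C) (hmoment : 𝔼 i, f i ^ (2 * k) ≤ C * (𝔼 i, f i ^ 2) ^ k) :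
    𝔼 i, f i ^ p ≤ C ^ (p / (2 * k)) * (𝔼 i, f i ^ 2) ^ (p / 2) := by
  have hV : 0 ≤ 𝔼 i, f i ^ 2 := expect_nonneg fun i _ => sq_nonneg (f i)
  have hk : (0 : ℝ) < k := by linarith
  calc 𝔼 i, f i ^ p ≤ (𝔼 i, f i ^ ((2 * k : ℕ) : ℝ)) ^ (p / (2 * k)) := by
        simpa using expect_rpow_le_expect_rpow_rpow hf hp hpk
    _ ≤ (C * (𝔼 i, f i ^ 2) ^ k) ^ (p / (2 * k)) := by
        simp only [Real.rpow_natCast]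
        gcongr
        exact expect_nonneg fun i _ => pow_nonneg (hf i) _
    _ = C ^ (p / (2 * k)) * (𝔼 i, f i ^ 2) ^ (p / 2) := by
        rw [Real.mul_rpow hC (by positivity), ← Real.rpow_natCast, ← Real.rpow_mul hV]
        congr 2
        field_simp

lemma inv_rpow_mul_rpow_le_expect_rpow [Nonempty ι] (hf : 0 ≤ f) {p C : ℝ} {k : ℕ} (hp : 0 < p)
    (hp4 : p < 4) (hpk : 4 - p ≤ 2 * k) (hC : 0 < C)
    (hmoment : 𝔼 i, f i ^ (2 * k) ≤ C * (𝔼 i, f i ^ 2) ^ k) :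
    (C ^ ((4 - p) / (2 * k)))⁻¹ * (𝔼 i, f i ^ 2) ^ (p / 2) ≤ 𝔼 i, f i ^ p := by
  set V := 𝔼 i, f i ^ 2
  have hI : 0 ≤ 𝔼 i, f i ^ p := expect_nonneg fun i _ => Real.rpow_nonneg (hf i) p
  have hV0 : 0 ≤ V := expect_nonneg fun i _ => sq_nonneg (f i)
  rcases hV0.eq_or_lt with hV | hV
  · rwa [← hV, Real.zero_rpow (by positivity), mul_zero]
  have hupper := expect_rpow_le_of_expect_pow_le hf (by linarith) hpk hC.le hmoment
  rw [inv_mul_le_iff₀ (Real.rpow_pos_of_pos hC _)]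
  refine le_of_mul_le_mul_right ?_ (Real.rpow_pos_of_pos hV ((4 - p) / 2))
  calc V ^ (p / 2) * V ^ ((4 - p) / 2) = V ^ 2 := by
        rw [← Real.rpow_add hV, show p / 2 + (4 - p) / 2 = (2 : ℝ) by ring, Real.rpow_two]
    _ ≤ (𝔼 i, f i ^ p) * 𝔼 i, f i ^ (4 - p) := sq_expect_sq_le_expect_rpow_mul_expect_rpow hf p
    _ ≤ (𝔼 i, f i ^ p) * (C ^ ((4 - p) / (2 * k)) * V ^ ((4 - p) / 2)) :=
        mul_le_mul_of_nonneg_left hupper hI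
    _ = C ^ ((4 - p) / (2 * k)) * (𝔼 i, f i ^ p) * V ^ ((4 - p) / 2) := by ring

lemma expect_rpow_bounds_of_expect_pow_le [Nonempty ι] (hf : 0 ≤ f) {p C : ℝ} {k : ℕ}
    (hp : 0 < p) (hk : 2 ≤ k) (hpk : p ≤ 2 * k) (hC : 0 < C)
    (hmoment : 𝔼 i, f i ^ (2 * k) ≤ C * (𝔼 i, f i ^ 2) ^ k) :
    min 1 (C ^ ((4 - p) / (2 * k)))⁻¹ * (𝔼 i, f i ^ 2) ^ (p / 2) ≤ 𝔼 i, f i ^ p ∧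
      𝔼 i, f i ^ p ≤ C ^ (p / (2 * k)) * (𝔼 i, f i ^ 2) ^ (p / 2) := by
  have hV : 0 ≤ (𝔼 i, f i ^ 2) ^ (p / 2) :=
    Real.rpow_nonneg (expect_nonneg fun i _ => sq_nonneg (f i)) _
  refine ⟨?_, expect_rpow_le_of_expect_pow_le hf hp hpk hC.le hmoment⟩
  rcases le_or_gt 2 p with hp2 | hp2
  · exact (mul_le_of_le_one_left hV (min_le_left _ _)).trans (rpow_expect_sq_le_expect_rpow hf hp2)
  · have hk' : (2 : ℝ) ≤ k := by exact_mod_cast hk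
    exact (mul_le_mul_of_nonneg_right (min_le_right _ _) hV).trans
      (inv_rpow_mul_rpow_le_expect_rpow hf hp (by linarith) (by linarith) hC hmoment)

end MomentComparison

theorem khinchine_inequality (p : ℝ) (hp : 0 < p) :
    ∃ A B : ℝ, 0 < A ∧ A ≤ B ∧
      ∀ (m : ℕ) (c : Fin m → ℂ),
        A * (∑ j, ‖c j‖ ^ 2) ^ (p / 2) ≤
            (∫ t in (0 : ℝ)..1,
              ‖∑ j, c j * (rademacher (j.1 + 1) t : ℂ)‖ ^ p) ∧
          (∫ t in (0 : ℝ)..1,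
              ‖∑ j, c j * (rademacher (j.1 + 1) t : ℂ)‖ ^ p) ≤
            B * (∑ j, ‖c j‖ ^ 2) ^ (p / 2) := by
  -- `k ≥ 2` so that the `2k`-th moment also controls the `(4 - p)`-th one when `p < 2`.
  set k := max 2 ⌈p / 2⌉₊
  have hpk : p ≤ 2 * k := by
    have : (⌈p / 2⌉₊ : ℝ) ≤ k := by exact_mod_cast le_max_right 2 ⌈p / 2⌉₊
    linarith [Nat.le_ceil (p / 2)]
  set C := 2 ^ (k + 1) * (2 * Real.exp (1 / 2) * (2 * k)!)
  have hC : 0 < C := by positivity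
  have hbounds : ∀ (m : ℕ) (c : Fin m → ℂ),
      min 1 (C ^ ((4 - p) / (2 * k)))⁻¹ * (∑ j, ‖c j‖ ^ 2) ^ (p / 2) ≤
          (∫ t in (0 : ℝ)..1, ‖∑ j, c j * (rademacher (j.1 + 1) t : ℂ)‖ ^ p) ∧
        (∫ t in (0 : ℝ)..1, ‖∑ j, c j * (rademacher (j.1 + 1) t : ℂ)‖ ^ p) ≤
          C ^ (p / (2 * k)) * (∑ j, ‖c j‖ ^ 2) ^ (p / 2) := by
    intro m c
    have hmoment := expect_norm_sum_mul_signOfBit_pow_le c k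
    rw [← expect_norm_sum_mul_signOfBit_sq] at hmoment ⊢
    rw [integral_comp_rademacher_eq_expect m (fun v => ‖∑ j, c j * (v j : ℂ)‖ ^ p)]
    exact expect_rpow_bounds_of_expect_pow_le (fun g => norm_nonneg _) hp (le_max_left _ _) hpk hC
      hmoment
  refine ⟨_, _, lt_min one_pos (inv_pos.2 (Real.rpow_pos_of_pos hC _)), ?_, hbounds⟩
  simpa using (hbounds 1 1).1.trans (hbounds 1 1).2
end
end

section
/- Let μ be a positive Borel measure on the unit disk, 0 < p ≤ q < ∞, α > -1, and 0 < r < 1. If sup_{a∈𝔻} μ(Δ(a,r))/(1-|a|²)^{(2+α)q/p} < ∞, then for every s > 0 there is a constant C such that sup_{a∈𝔻} ∫_𝔻 (1-|a|²)^s / |1 - conj(a) z|^{(2+α)q/p + s} dμ(z) ≤ C. -/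
/-!
Write `t = (2 + α) q / p > 1`. The ball condition `μ(Δ(b, r)) ≲ (1 - |b|²)^t` implies the box
condition `μ {z ∈ 𝔻 : |1 - ā z| < ρ} ≲ ρ^t`. With `η = min ρ 1`, the box lies in the union of the
layers `β^(m+1) η < 1 - |z| ≤ β^m η` (where `β ≥ 1 - r/4`) of angular width `≲ η` around the
direction of `a`, and the `m`-th layer is covered by `≲ β^(-m)` pseudo-hyperbolic discs of radius
`r` centred on the circle of radius `1 - β^m η`. Its measure is therefore `≲ η^t β^(m(t-1))`,
a convergent geometric series because `t > 1`.

The Berezin integral is then split over the dyadic shells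
`2^n (1 - |a|) ≤ |1 - ā z| < 2^(n+1) (1 - |a|)`. On the `n`-th shell the integrand is
`≲ 2^(-n(t+s)) (1 - |a|)^(-t)` and the box condition bounds the measure by `≲ 2^(nt) (1 - |a|)^t`,
leaving the geometric series `∑ 2^(-ns)`.
-/

open MeasureTheory
open scoped ComplexConjugate ENNReal

noncomputable section

/-- The pseudo-hyperbolic ball `Δ(a,r)` in the unit disk. -/
def DeltaD (a : ℂ) (r : ℝ) : Set ℂ := {z : ℂ | ‖z‖ < 1 ∧ pseudoDistD a z < r}

open Complex
open scoped Real

theorem ENNReal.tsum_ofReal_mul_geometric {c γ : ℝ} (hc : 0 ≤ c) (hγ0 : 0 ≤ γ) (hγ1 : γ < 1) :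
    ∑' n : ℕ, ENNReal.ofReal (c * γ ^ n) = ENNReal.ofReal (c * (1 - γ)⁻¹) := by
  rw [← ENNReal.ofReal_tsum_of_nonneg (fun n => by positivity)
    ((summable_geometric_of_lt_one hγ0 hγ1).mul_left c), tsum_mul_left,
    tsum_geometric_of_lt_one hγ0 hγ1]

theorem norm_sub_ofReal_mul_exp_le (w : ℂ) {R : ℝ} (hR : 0 ≤ R) (ψ : ℝ) :
    ‖w - R * exp (ψ * I)‖ ≤ |‖w‖ - R| + R * |arg w - ψ| := by
  have hrot : exp (arg w * I) - exp (ψ * I) = exp (ψ * I) * (exp (I * ↑(arg w - ψ)) - 1) := by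
    rw [mul_sub, ← exp_add]; push_cast; ring_nf
  have hsplit : w - R * exp (ψ * I) =
      ((‖w‖ - R : ℝ) : ℂ) * exp (arg w * I) + R * (exp (arg w * I) - exp (ψ * I)) := by
    conv_lhs => rw [← norm_mul_exp_arg_mul_I w]
    push_cast; ring
  calc ‖w - R * exp (ψ * I)‖
      ≤ ‖((‖w‖ - R : ℝ) : ℂ) * exp (arg w * I)‖ + ‖(R : ℂ) * (exp (arg w * I) - exp (ψ * I))‖ :=
        hsplit ▸ norm_add_le _ _
    _ ≤ |‖w‖ - R| + R * |arg w - ψ| := by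
        rw [norm_mul, norm_mul, norm_exp_ofReal_mul_I, norm_real, norm_real, hrot, norm_mul,
          norm_exp_ofReal_mul_I, Real.norm_of_nonneg hR, mul_one, one_mul, Real.norm_eq_abs]
        gcongr
        exact Real.norm_exp_I_mul_ofReal_sub_one_le

theorem abs_arg_le_pi_mul_norm_one_sub (w : ℂ) : |arg w| ≤ π * ‖1 - w‖ := by
  have hcircle : ‖exp (I * arg w) - 1‖ ≤ 2 * ‖1 - w‖ := by
    have hw := norm_sub_ofReal_mul_exp_le w zero_le_one (arg w)
    rw [sub_self, abs_zero, mul_zero, add_zero, ofReal_one, one_mul, norm_sub_rev] at hw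
    calc ‖exp (I * arg w) - 1‖ ≤ ‖exp (arg w * I) - w‖ + ‖w - 1‖ := by
          rw [mul_comm]; exact norm_sub_le_norm_sub_add_norm_sub _ _ _
      _ ≤ 2 * ‖1 - w‖ := by
          have := abs_norm_sub_norm_le w 1
          rw [norm_one, norm_sub_rev] at this
          rw [norm_sub_rev w]; linarith
  have hjordan : 2 / π * |arg w / 2| ≤ |Real.sin (arg w / 2)| := by
    refine Real.mul_abs_le_abs_sin ?_
    rw [abs_div, abs_two]
    gcongr
    exact abs_le.mpr ⟨(neg_pi_lt_arg w).le, arg_le_pi w⟩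
  rw [norm_exp_I_mul_ofReal_sub_one, norm_mul, Real.norm_two, Real.norm_eq_abs] at hcircle
  rw [abs_div, abs_two] at hjordan
  have := Real.pi_pos
  calc |arg w| = π / 2 * (2 * (2 / π * (|arg w| / 2))) := by field_simp
    _ ≤ π * ‖1 - w‖ := by nlinarith

theorem one_sub_norm_mul_norm_le (a z : ℂ) : 1 - ‖a‖ * ‖z‖ ≤ ‖1 - conj a * z‖ := by
  simpa [norm_mul] using norm_sub_norm_le (1 : ℂ) (conj a * z)

theorem mem_DeltaD_of_norm_sub_lt {b z : ℂ} {r : ℝ} (hb : ‖b‖ < 1) (hz : ‖z‖ < 1)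
    (h : ‖z - b‖ < r * (1 - ‖b‖)) : z ∈ DeltaD b r := by
  have hden : 1 - ‖b‖ ≤ ‖1 - conj z * b‖ := by
    nlinarith [one_sub_norm_mul_norm_le z b, norm_nonneg z, norm_nonneg b]
  have hr : 0 ≤ r := by
    by_contra! hr; nlinarith [norm_nonneg (z - b)]
  refine ⟨hz, ?_⟩
  rw [pseudoDistD, div_lt_iff₀ (by linarith), norm_sub_rev]
  exact h.trans_le (mul_le_mul_of_nonneg_left hden hr)

def circleGridPoint (u : ℂ) (h θ : ℝ) (j : ℤ) : ℂ := u * ((1 - h : ℝ) * exp ((j * θ : ℝ) * I))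

theorem norm_circleGridPoint {u : ℂ} (hu : ‖u‖ = 1) {h : ℝ} (hh : h ≤ 1) (θ : ℝ) (j : ℤ) :
    ‖circleGridPoint u h θ j‖ = 1 - h := by
  rw [circleGridPoint, norm_mul, hu, one_mul, norm_mul, norm_exp_ofReal_mul_I, mul_one, norm_real,
    Real.norm_of_nonneg (by linarith)]

def polarLayer (u : ℂ) (β η h : ℝ) : Set ℂ :=
  {z | ‖z‖ < 1 ∧ β * h < 1 - ‖z‖ ∧ 1 - ‖z‖ ≤ h ∧ |arg (conj u * z)| ≤ π * η}

theorem polarLayer_subset_iUnion_DeltaD {u : ℂ} (hu : ‖u‖ = 1) {r β η h : ℝ} {N : ℕ}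
    (hr : 0 < r) (hβ : 1 - r / 4 ≤ β) (hh0 : 0 < h) (hh1 : h ≤ 1)
    (hN : 4 * π * η / (r * h) + 1 ≤ N) :
    polarLayer u β η h ⊆
      ⋃ j ∈ Finset.Icc (-(N : ℤ)) N, DeltaD (circleGridPoint u h (r * h / 4) j) r := by
  rintro z ⟨hz, hlow, hup, harg⟩
  set θ := r * h / 4 with hθ
  have hθ0 : 0 < θ := by positivity
  set φ := arg (conj u * z)
  set j := round (φ / θ)
  have hφj : |φ - j * θ| ≤ θ / 2 := by
    have := abs_sub_round (φ / θ)
    calc |φ - j * θ| = |φ / θ - j| * θ := by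
          rw [← abs_of_pos hθ0, ← abs_mul, abs_of_pos hθ0, sub_mul, div_mul_cancel₀ _ hθ0.ne']
      _ ≤ θ / 2 := by nlinarith
  have hjN : j ∈ Finset.Icc (-(N : ℤ)) N := by
    have hφθ : |φ / θ| ≤ 4 * π * η / (r * h) := by
      rw [abs_div, abs_of_pos hθ0, div_le_iff₀ hθ0, hθ]
      calc |φ| ≤ π * η := harg
        _ = 4 * π * η / (r * h) * (r * h / 4) := by field_simp
    have hj : |(j : ℝ)| ≤ N := by
      have := abs_sub_round (φ / θ)
      have := abs_sub_abs_le_abs_sub (j : ℝ) (φ / θ)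
      rw [abs_sub_comm] at this
      linarith
    rw [Finset.mem_Icc, ← abs_le]
    exact_mod_cast hj
  have hb := norm_circleGridPoint hu hh1 θ j
  refine Set.mem_iUnion₂.mpr ⟨j, hjN, mem_DeltaD_of_norm_sub_lt (by rw [hb]; linarith) hz ?_⟩
  have hrotate : ‖z - circleGridPoint u h θ j‖ =
      ‖conj u * z - (1 - h : ℝ) * exp ((j * θ : ℝ) * I)‖ := by
    have hunit : conj u * u = 1 := by rw [conj_mul', hu]; norm_num
    calc ‖z - circleGridPoint u h θ j‖ = ‖conj u‖ * ‖z - circleGridPoint u h θ j‖ := by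
          rw [Complex.norm_conj, hu, one_mul]
      _ = _ := by rw [← norm_mul, mul_sub, circleGridPoint, ← mul_assoc, hunit, one_mul]
  have hnorm : ‖conj u * z‖ = ‖z‖ := by rw [norm_mul, Complex.norm_conj, hu, one_mul]
  rw [hrotate, hb]
  calc ‖conj u * z - (1 - h : ℝ) * exp ((j * θ : ℝ) * I)‖
      ≤ |‖z‖ - (1 - h)| + (1 - h) * |φ - j * θ| := by
        rw [← hnorm]; exact norm_sub_ofReal_mul_exp_le _ (by linarith) _
    -- radial error `< (1 - β) h ≤ r h / 4`, angular error `≤ θ / 2 = r h / 8`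
    _ ≤ (1 - β) * h + 1 * (θ / 2) := by
        rw [abs_of_nonneg (by linarith)]
        gcongr
        · linarith
        · linarith
    _ < r * (1 - (1 - h)) := by rw [hθ]; nlinarith

theorem measure_polarLayer_le {μ : Measure ℂ} {r M t : ℝ} (hr : 0 < r) (hM : 0 ≤ M) (ht : 0 ≤ t)
    (hcar : ∀ b : ℂ, ‖b‖ < 1 → μ (DeltaD b r) ≤ ENNReal.ofReal (M * (1 - ‖b‖ ^ 2) ^ t))
    {u : ℂ} (hu : ‖u‖ = 1) {β η h : ℝ} (hβ : 1 - r / 4 ≤ β) (hh0 : 0 < h) (hhη : h ≤ η)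
    (hη1 : η ≤ 1) :
    μ (polarLayer u β η h) ≤ ENNReal.ofReal ((8 * π / r + 5) * M * 2 ^ t * η * h ^ (t - 1)) := by
  have hη0 : 0 < η := hh0.trans_le hhη
  set N := ⌈4 * π * η / (r * h)⌉₊ + 1
  have hN : 4 * π * η / (r * h) + 1 ≤ N := by
    push_cast [N]; gcongr; exact Nat.le_ceil _
  have hcount : (2 * N + 1 : ℝ) * h ≤ (8 * π / r + 5) * η := by
    have := Nat.ceil_lt_add_one (show 0 ≤ 4 * π * η / (r * h) by positivity)
    have hsplit : (8 * π / r + 5) * η = 2 * (4 * π * η / (r * h)) * h + 5 * η := by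
      field_simp; ring
    push_cast [N]
    rw [hsplit]
    nlinarith
  have hball : ∀ j : ℤ, μ (DeltaD (circleGridPoint u h (r * h / 4) j) r) ≤
      ENNReal.ofReal (M * (2 * h) ^ t) := by
    intro j
    have hb := norm_circleGridPoint hu (hhη.trans hη1) (r * h / 4) j
    refine (hcar _ (by rw [hb]; linarith)).trans (ENNReal.ofReal_le_ofReal ?_)
    rw [hb]
    gcongr
    · nlinarith
    · nlinarith
  calc μ (polarLayer u β η h)
      ≤ μ (⋃ j ∈ Finset.Icc (-(N : ℤ)) N, DeltaD (circleGridPoint u h (r * h / 4) j) r) :=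
        measure_mono (polarLayer_subset_iUnion_DeltaD hu hr hβ hh0 (hhη.trans hη1) hN)
    _ ≤ ∑ j ∈ Finset.Icc (-(N : ℤ)) N, μ (DeltaD (circleGridPoint u h (r * h / 4) j) r) :=
        measure_biUnion_finset_le _ _
    _ ≤ ∑ _j ∈ Finset.Icc (-(N : ℤ)) N, ENNReal.ofReal (M * (2 * h) ^ t) :=
        Finset.sum_le_sum fun j _ => hball j
    _ = ENNReal.ofReal ((2 * N + 1 : ℕ) * (M * (2 * h) ^ t)) := by
        rw [Finset.sum_const, Int.card_Icc, nsmul_eq_mul,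
          show (N + 1 - -N : ℤ).toNat = 2 * N + 1 by omega,
          ENNReal.ofReal_mul (Nat.cast_nonneg _), ENNReal.ofReal_natCast]
    _ ≤ ENNReal.ofReal ((8 * π / r + 5) * M * 2 ^ t * η * h ^ (t - 1)) := by
        refine ENNReal.ofReal_le_ofReal ?_
        rw [Real.mul_rpow zero_le_two hh0.le, show h ^ t = h ^ (t - 1) * h by
          rw [← Real.rpow_add_one hh0.ne', sub_add_cancel]]
        have : 0 ≤ M * 2 ^ t * h ^ (t - 1) := by positivity
        calc ((2 * N + 1 : ℕ) : ℝ) * (M * (2 ^ t * (h ^ (t - 1) * h)))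
            = (2 * N + 1 : ℝ) * h * (M * 2 ^ t * h ^ (t - 1)) := by push_cast; ring
          _ ≤ (8 * π / r + 5) * η * (M * 2 ^ t * h ^ (t - 1)) := by gcongr
          _ = _ := by ring

def carlesonBox (a : ℂ) (ρ : ℝ) : Set ℂ := {z | ‖z‖ < 1 ∧ ‖1 - conj a * z‖ < ρ}

theorem carlesonBox_subset_iUnion_polarLayer {a : ℂ} (ha : ‖a‖ ≤ 1) {ρ β : ℝ} (hρ : 0 < ρ)
    (hβ0 : 0 < β) (hβ1 : β < 1) :
    carlesonBox a ρ ⊆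
      ⋃ m : ℕ, polarLayer (exp (arg a * I)) β (min ρ 1) (β ^ m * min ρ 1) := by
  rintro z ⟨hz, hza⟩
  set η := min ρ 1 with hη
  have hη0 : 0 < η := lt_min hρ one_pos
  have hdepth : 1 - ‖z‖ ≤ η := by
    refine le_min ?_ (by linarith [norm_nonneg z])
    nlinarith [norm_nonneg z, one_sub_norm_mul_norm_le a z]
  have hangle : |arg (conj (exp (arg a * I)) * z)| ≤ π * η := by
    rcases le_total 1 ρ with hρ1 | hρ1
    · rw [hη, min_eq_right hρ1, mul_one]; exact abs_arg_le_pi _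
    have ha : 0 < ‖a‖ := by
      refine norm_pos_iff.mpr fun ha0 => ?_
      simp only [ha0, map_zero, zero_mul, sub_zero, norm_one] at hza
      linarith
    have hconj : conj a * z = ‖a‖ * (conj (exp (arg a * I)) * z) := by
      conv_lhs => rw [← norm_mul_exp_arg_mul_I a]
      rw [map_mul, conj_ofReal, mul_assoc]
    rw [← arg_real_mul _ ha, ← hconj, hη, min_eq_left hρ1]
    exact (abs_arg_le_pi_mul_norm_one_sub _).trans (by gcongr)
  obtain ⟨m, hm_low, hm_up⟩ := exists_nat_pow_near_of_lt_one
    (div_pos (by linarith) hη0) ((div_le_one hη0).mpr hdepth) hβ0 hβ1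
  refine Set.mem_iUnion.mpr ⟨m, hz, ?_, ?_, hangle⟩
  · rw [lt_div_iff₀ hη0] at hm_low; rw [← mul_assoc, ← pow_succ']; exact hm_low
  · rwa [div_le_iff₀ hη0] at hm_up

theorem exists_measure_carlesonBox_le {μ : Measure ℂ} {r M t : ℝ} (hr : 0 < r) (hM : 0 ≤ M)
    (ht : 1 < t)
    (hcar : ∀ b : ℂ, ‖b‖ < 1 → μ (DeltaD b r) ≤ ENNReal.ofReal (M * (1 - ‖b‖ ^ 2) ^ t)) :
    ∃ K, 0 ≤ K ∧ ∀ a : ℂ, ‖a‖ ≤ 1 → ∀ ρ, 0 < ρ →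
      μ (carlesonBox a ρ) ≤ ENNReal.ofReal (K * ρ ^ t) := by
  set β := max (1 - r / 4) (1 / 2)
  have hβ0 : 0 < β := lt_max_of_lt_right one_half_pos
  have hβ1 : β < 1 := max_lt (by linarith) one_half_lt_one
  set γ := β ^ (t - 1)
  have hγ0 : 0 ≤ γ := by positivity
  have hγ1 : γ < 1 := Real.rpow_lt_one hβ0.le hβ1 (by linarith)
  set C := (8 * π / r + 5) * M * 2 ^ t
  have hC : 0 ≤ C := by positivity
  refine ⟨C * (1 - γ)⁻¹, by have := sub_pos.mpr hγ1; positivity, fun a ha ρ hρ => ?_⟩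
  set η := min ρ 1
  have hη0 : 0 < η := lt_min hρ one_pos
  have hlayer : ∀ m : ℕ, C * η * (β ^ m * η) ^ (t - 1) = C * η ^ t * γ ^ m := by
    intro m
    rw [Real.mul_rpow (by positivity) hη0.le, ← Real.rpow_pow_comm hβ0.le,
      show η ^ t = η * η ^ (t - 1) by rw [← Real.rpow_one_add' hη0.le (by linarith)]; ring_nf]
    ring
  calc μ (carlesonBox a ρ)
      ≤ μ (⋃ m : ℕ, polarLayer (exp (arg a * I)) β η (β ^ m * η)) :=
        measure_mono (carlesonBox_subset_iUnion_polarLayer ha hρ hβ0 hβ1)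
    _ ≤ ∑' m : ℕ, μ (polarLayer (exp (arg a * I)) β η (β ^ m * η)) := measure_iUnion_le _
    _ ≤ ∑' m : ℕ, ENNReal.ofReal (C * η ^ t * γ ^ m) := by
        refine ENNReal.tsum_le_tsum fun m => ?_
        rw [← hlayer]
        exact measure_polarLayer_le hr hM (by linarith) hcar (norm_exp_ofReal_mul_I _)
          (le_max_left _ _) (by positivity)
          (mul_le_of_le_one_left hη0.le (pow_le_one₀ hβ0.le hβ1.le)) (min_le_right _ _)
    _ = ENNReal.ofReal (C * η ^ t * (1 - γ)⁻¹) :=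
        ENNReal.tsum_ofReal_mul_geometric (by positivity) hγ0 hγ1
    _ ≤ ENNReal.ofReal (C * (1 - γ)⁻¹ * ρ ^ t) := by
        have := sub_pos.mpr hγ1
        have : η ^ t ≤ ρ ^ t := by gcongr; exact min_le_left _ _
        refine ENNReal.ofReal_le_ofReal ?_
        calc C * η ^ t * (1 - γ)⁻¹ = C * (1 - γ)⁻¹ * η ^ t := by ring
          _ ≤ C * (1 - γ)⁻¹ * ρ ^ t := by gcongr

theorem setLIntegral_rpow_div_le_of_measure_sublevel_le {X : Type*} [MeasurableSpace X]
    {μ : Measure X} {E : Set X} {g : X → ℝ} {c K t s : ℝ} (hc : 0 < c) (hK : 0 ≤ K)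
    (ht : 0 ≤ t) (hs : 0 < s) (hgc : ∀ x ∈ E, c ≤ g x)
    (hμ : ∀ ρ, 0 < ρ → μ {x | x ∈ E ∧ g x < ρ} ≤ ENNReal.ofReal (K * ρ ^ t)) :
    ∫⁻ x in E, ENNReal.ofReal (c ^ s / g x ^ (t + s)) ∂μ ≤
      ENNReal.ofReal (K * 2 ^ t * (1 - 2 ^ (-s))⁻¹) := by
  set shell : ℕ → Set X := fun n => {x | x ∈ E ∧ c * 2 ^ n ≤ g x ∧ g x < c * 2 ^ (n + 1)}
  have hcover : E ⊆ ⋃ n, shell n := by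
    intro x hx
    obtain ⟨n, hn_low, hn_up⟩ := exists_nat_pow_near ((one_le_div hc).mpr (hgc x hx)) one_lt_two
    rw [le_div_iff₀ hc, mul_comm] at hn_low
    rw [div_lt_iff₀ hc, mul_comm] at hn_up
    exact Set.mem_iUnion.mpr ⟨n, hx, hn_low, hn_up⟩
  have hshell : ∀ n : ℕ, ∫⁻ x in shell n, ENNReal.ofReal (c ^ s / g x ^ (t + s)) ∂μ ≤
      ENNReal.ofReal (K * 2 ^ t * (2 ^ (-s)) ^ n) := by
    intro n
    have hcn : 0 < c * 2 ^ n := by positivity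
    calc ∫⁻ x in shell n, ENNReal.ofReal (c ^ s / g x ^ (t + s)) ∂μ
        ≤ ∫⁻ _ in shell n, ENNReal.ofReal (c ^ s / (c * 2 ^ n) ^ (t + s)) ∂μ := by
          refine setLIntegral_mono measurable_const fun x hx => ENNReal.ofReal_le_ofReal ?_
          gcongr
          exact hx.2.1
      _ = ENNReal.ofReal (c ^ s / (c * 2 ^ n) ^ (t + s)) * μ (shell n) := setLIntegral_const _ _
      _ ≤ ENNReal.ofReal (c ^ s / (c * 2 ^ n) ^ (t + s)) *
            ENNReal.ofReal (K * (c * 2 ^ (n + 1)) ^ t) :=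
          mul_le_mul_right ((measure_mono (show shell n ⊆ {x | x ∈ E ∧ g x < c * 2 ^ (n + 1)}
            from fun _ hx => ⟨hx.1, hx.2.2⟩)).trans (hμ _ (by positivity))) _
      _ = ENNReal.ofReal (K * 2 ^ t * (2 ^ (-s)) ^ n) := by
          have h2n : (0 : ℝ) < 2 ^ n := by positivity
          rw [← ENNReal.ofReal_mul (by positivity), Real.rpow_pow_comm zero_le_two, pow_succ,
            show c * (2 ^ n * 2) = c * 2 ^ n * 2 by ring, Real.mul_rpow hcn.le zero_le_two,
            Real.mul_rpow hc.le h2n.le, Real.mul_rpow hc.le h2n.le, Real.rpow_add hc,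
            Real.rpow_add h2n, Real.rpow_neg h2n.le]
          congr 1
          field_simp
  have h2s : (2 : ℝ) ^ (-s) < 1 := Real.rpow_lt_one_of_one_lt_of_neg one_lt_two (by linarith)
  calc ∫⁻ x in E, ENNReal.ofReal (c ^ s / g x ^ (t + s)) ∂μ
      ≤ ∫⁻ x in ⋃ n, shell n, ENNReal.ofReal (c ^ s / g x ^ (t + s)) ∂μ :=
        lintegral_mono' (Measure.restrict_mono hcover le_rfl) le_rfl
    _ ≤ ∑' n, ∫⁻ x in shell n, ENNReal.ofReal (c ^ s / g x ^ (t + s)) ∂μ :=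
        lintegral_iUnion_le _ _
    _ ≤ ∑' n : ℕ, ENNReal.ofReal (K * 2 ^ t * (2 ^ (-s)) ^ n) := ENNReal.tsum_le_tsum hshell
    _ = ENNReal.ofReal (K * 2 ^ t * (1 - 2 ^ (-s))⁻¹) :=
        ENNReal.tsum_ofReal_mul_geometric (by positivity) (by positivity) h2s

theorem berezin_lintegral_le_of_measure_carlesonBox_le {μ : Measure ℂ} {a : ℂ} (ha : ‖a‖ < 1)
    {K t s : ℝ} (hK : 0 ≤ K) (ht : 0 ≤ t) (hs : 0 < s)
    (hbox : ∀ ρ, 0 < ρ → μ (carlesonBox a ρ) ≤ ENNReal.ofReal (K * ρ ^ t)) :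
    ∫⁻ z in {z : ℂ | ‖z‖ < 1}, ENNReal.ofReal ((1 - ‖a‖ ^ 2) ^ s / ‖1 - conj a * z‖ ^ (t + s)) ∂μ ≤
      ENNReal.ofReal (2 ^ s * (K * 2 ^ t * (1 - 2 ^ (-s))⁻¹)) := by
  have hc : 0 < 1 - ‖a‖ := sub_pos.mpr ha
  have hgc : ∀ z ∈ {z : ℂ | ‖z‖ < 1}, 1 - ‖a‖ ≤ ‖1 - conj a * z‖ := fun z hz => by
    nlinarith [norm_nonneg a, (show ‖z‖ < 1 from hz).le, one_sub_norm_mul_norm_le a z]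
  have hδ : ∀ z, (1 - ‖a‖ ^ 2) ^ s / ‖1 - conj a * z‖ ^ (t + s) ≤
      2 ^ s * ((1 - ‖a‖) ^ s / ‖1 - conj a * z‖ ^ (t + s)) := fun z => by
    rw [← mul_div_assoc, ← Real.mul_rpow zero_le_two hc.le]
    gcongr
    · nlinarith [norm_nonneg a]
    · nlinarith [norm_nonneg a]
  calc ∫⁻ z in {z : ℂ | ‖z‖ < 1},
        ENNReal.ofReal ((1 - ‖a‖ ^ 2) ^ s / ‖1 - conj a * z‖ ^ (t + s)) ∂μ
      ≤ ∫⁻ z in {z : ℂ | ‖z‖ < 1}, ENNReal.ofReal (2 ^ s) *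
          ENNReal.ofReal ((1 - ‖a‖) ^ s / ‖1 - conj a * z‖ ^ (t + s)) ∂μ :=
        lintegral_mono fun z => by
          rw [← ENNReal.ofReal_mul (by positivity)]; exact ENNReal.ofReal_le_ofReal (hδ z)
    _ = ENNReal.ofReal (2 ^ s) * ∫⁻ z in {z : ℂ | ‖z‖ < 1},
          ENNReal.ofReal ((1 - ‖a‖) ^ s / ‖1 - conj a * z‖ ^ (t + s)) ∂μ :=
        lintegral_const_mul' _ _ ENNReal.ofReal_ne_top
    _ ≤ ENNReal.ofReal (2 ^ s) * ENNReal.ofReal (K * 2 ^ t * (1 - 2 ^ (-s))⁻¹) := by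
        gcongr
        exact setLIntegral_rpow_div_le_of_measure_sublevel_le hc hK ht hs hgc hbox
    _ = ENNReal.ofReal (2 ^ s * (K * 2 ^ t * (1 - 2 ^ (-s))⁻¹)) :=
        (ENNReal.ofReal_mul (by positivity)).symm

theorem carleson_ball_implies_berezin_bound_general (μ : Measure ℂ)
    (p q α r : ℝ) (hp : 0 < p) (hpq : p ≤ q) (hα : -1 < α) (hr0 : 0 < r)
    (hcar : ∃ M : ℝ, ∀ a : ℂ, ‖a‖ < 1 →
      μ (DeltaD a r) ≤ ENNReal.ofReal (M * (1 - ‖a‖ ^ 2) ^ ((2 + α) * q / p))) :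
    ∀ s : ℝ, 0 < s → ∃ C : ℝ,
      ∀ a : ℂ, ‖a‖ < 1 →
        (∫⁻ z in {z : ℂ | ‖z‖ < 1},
            ENNReal.ofReal ((1 - ‖a‖ ^ 2) ^ s /
              ‖1 - conj a * z‖ ^ ((2 + α) * q / p + s)) ∂μ) ≤
          ENNReal.ofReal C := by
  intro s hs
  set t := (2 + α) * q / p
  have ht : 1 < t := by
    rw [lt_div_iff₀ hp]
    nlinarith
  obtain ⟨M, hM⟩ := hcar
  have hM₀ : ∀ b : ℂ, ‖b‖ < 1 → μ (DeltaD b r) ≤ ENNReal.ofReal (max M 0 * (1 - ‖b‖ ^ 2) ^ t) :=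
    fun b hb => (hM b hb).trans <| ENNReal.ofReal_le_ofReal <| mul_le_mul_of_nonneg_right
      (le_max_left M 0) (Real.rpow_nonneg (by nlinarith [norm_nonneg b]) t)
  obtain ⟨K, hK, hbox⟩ := exists_measure_carlesonBox_le hr0 (le_max_right M (0 : ℝ)) ht hM₀
  exact ⟨_, fun a ha =>
    berezin_lintegral_le_of_measure_carlesonBox_le ha hK (by linarith) hs (hbox a ha.le)⟩

theorem carleson_ball_implies_berezin_bound (μ : Measure ℂ)
    (hsupp : μ {z : ℂ | 1 ≤ ‖z‖} = 0)
    (p q α r : ℝ) (hp : 0 < p) (hpq : p ≤ q) (hα : -1 < α) (hr0 : 0 < r) (hr1 : r < 1)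
    (hcar : ∃ M : ℝ, ∀ a : ℂ, ‖a‖ < 1 →
      μ (DeltaD a r) ≤ ENNReal.ofReal (M * (1 - ‖a‖ ^ 2) ^ ((2 + α) * q / p))) :
    ∀ s : ℝ, 0 < s → ∃ C : ℝ,
      ∀ a : ℂ, ‖a‖ < 1 →
        (∫⁻ z in {z : ℂ | ‖z‖ < 1},
            ENNReal.ofReal ((1 - ‖a‖ ^ 2) ^ s /
              ‖1 - conj a * z‖ ^ ((2 + α) * q / p + s)) ∂μ) ≤
          ENNReal.ofReal C :=
  carleson_ball_implies_berezin_bound_general μ p q α r hp hpq hα hr0 hcar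
end
end

section
/- Let μ be a finite positive Borel measure on the unit disk satisfying the Carleson condition sup_{a} μ(Δ(a,r))/(1-|a|²)^{(2+α)λ} < ∞ for some fixed 0 < r < 1 and λ > 0, α > -1. Then limsup_{|a|→1} μ(Δ(a,r))/(1-|a|²)^{(2+α)λ} = limsup_{s→1} sup_{a∈𝔻} μ(Δ(a,r) ∩ {|z| ≥ s})/(1-|a|²)^{(2+α)λ}. -/
/-!
A pseudo-hyperbolic ball `Δ(a,r)` stays within Euclidean distance `O(1 - |a|)` of `a`, namely
`(1 - r)(1 - |z|) < (1 + r)(1 - |a|)` on it, so for `|a|` close to `1` it lies inside the annulus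
`{|z| ≥ s}`; this gives `≤`. Conversely, on `|a| ≤ t < 1` the weight is bounded below while
`μ{|z| ≥ s} → μ{|z| ≥ 1} = 0` as `s → 1`, so for `s` near `1` the tail supremum is governed by the
points with `|a| > t`, where the ratio is already close to its limsup.
-/

open MeasureTheory
open scoped ComplexConjugate ENNReal

noncomputable section

/-- The filter of `a` in the unit disk with `|a| → 1`. -/
def toBoundary : Filter ℂ :=
  Filter.comap (fun a : ℂ => ‖a‖) (nhdsWithin 1 (Set.Iio 1))

open Filter Set Topology

lemma one_sub_norm_lt_of_mem_DeltaD {a z : ℂ} {r : ℝ} (hr1 : r < 1) (ha : ‖a‖ < 1)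
    (hz : z ∈ DeltaD a r) : (1 - r) * (1 - ‖z‖) < (1 + r) * (1 - ‖a‖) := by
  obtain ⟨hz1, hρ⟩ := hz
  have hden : 0 < ‖1 - conj z * a‖ := by
    have : ‖conj z * a‖ < 1 := by
      rw [norm_mul, Complex.norm_conj]
      nlinarith [norm_nonneg z, norm_nonneg a]
    linarith [norm_sub_norm_le (1 : ℂ) (conj z * a), norm_one (α := ℂ)]
  have hlt : ‖a - z‖ < r * ‖1 - conj z * a‖ := (div_lt_iff₀ hden).1 hρ
  have hr0 : 0 < r := by nlinarith [norm_nonneg (a - z)]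
  have hden_le : ‖1 - conj z * a‖ ≤ (1 - ‖a‖ ^ 2) + ‖a - z‖ * ‖a‖ := by
    have h1 : (1 : ℂ) - conj z * a = ((1 - ‖a‖ ^ 2 : ℝ) : ℂ) + conj (a - z) * a := by
      push_cast
      rw [map_sub, ← Complex.conj_mul']
      ring
    rw [h1]
    refine (norm_add_le _ _).trans_eq ?_
    rw [Complex.norm_real, Real.norm_of_nonneg (by nlinarith [norm_nonneg a]), norm_mul,
      Complex.norm_conj]
  have hdist : (1 - r) * ‖a - z‖ < 2 * r * (1 - ‖a‖) := by
    have h1a : 0 ≤ 1 - ‖a‖ := by linarith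
    nlinarith [mul_le_mul_of_nonneg_left hden_le hr0.le,
      mul_nonneg (mul_nonneg hr0.le (norm_nonneg (a - z))) h1a,
      mul_nonneg hr0.le (sq_nonneg (1 - ‖a‖))]
  nlinarith [norm_sub_norm_le a z]

lemma toBoundary_basis :
    toBoundary.HasBasis (· < 1) fun t => (fun a : ℂ => ‖a‖) ⁻¹' Ioo t 1 :=
  (nhdsLT_basis 1).comap _

instance toBoundary_neBot : toBoundary.NeBot := by
  refine toBoundary_basis.neBot_iff.2 fun {t} ht => ?_
  obtain ⟨x, hx⟩ := exists_between (max_lt ht one_pos)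
  refine ⟨x, ?_, ?_⟩ <;> simp only [Complex.norm_real, Real.norm_of_nonneg
    ((le_max_right t 0).trans hx.1.le)]
  exacts [(le_max_left t 0).trans_lt hx.1, hx.2]

lemma eventually_norm_lt_one_toBoundary : ∀ᶠ a in toBoundary, ‖a‖ < 1 :=
  toBoundary_basis.eventually_iff.2 ⟨0, one_pos, fun _ ha => ha.2⟩

lemma eventually_DeltaD_subset_norm_ge {r s : ℝ} (hr1 : r < 1) (hs : s < 1) :
    ∀ᶠ a in toBoundary, DeltaD a r ⊆ {z | s ≤ ‖z‖} := by
  refine toBoundary_basis.eventually_iff.2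
    ⟨1 - (1 - r) * (1 - s) / 2, by nlinarith, fun a ha z hz => ?_⟩
  obtain ⟨hta, ha1⟩ := ha
  have := one_sub_norm_lt_of_mem_DeltaD hr1 ha1 hz
  show s ≤ ‖z‖
  nlinarith

theorem tendsto_measure_setOf_le_nhdsLT {α : Type*} [MeasurableSpace α] (μ : Measure α)
    [IsFiniteMeasure μ] {f : α → ℝ} (hf : Measurable f) (c : ℝ) :
    Tendsto (fun s => μ {x | s ≤ f x}) (𝓝[<] c) (𝓝 (μ {x | c ≤ f x})) := by
  -- continuity from above along `s ↑ c`, which is `s ↓ c` in `ℝᵒᵈ`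
  have := tendsto_measure_biInter_gt (μ := μ) (ι := ℝᵒᵈ) (a := OrderDual.toDual c)
    (s := fun s => {x | OrderDual.ofDual s ≤ f x})
    (fun _ _ => (measurableSet_le measurable_const hf).nullMeasurableSet)
    (fun _ _ _ hij _ hx => (OrderDual.ofDual_le_ofDual.2 hij).trans hx) ⟨_, exists_gt _ |>.choose_spec, measure_ne_top _ _⟩
  have hinter : ⋂ s > OrderDual.toDual c, {x | OrderDual.ofDual s ≤ f x} = {x | c ≤ f x} := by
    ext x
    simp only [mem_iInter, mem_ofPred_eq]
    exact ⟨fun h => le_of_forall_lt_imp_le_of_dense fun s hs => h s hs,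
      fun h s hs => (show OrderDual.ofDual s < c from hs).le.trans h⟩
  rwa [hinter] at this

lemma exists_pos_le_one_sub_norm_sq_rpow (p : ℝ) {t : ℝ} (ht : t < 1) :
    ∃ c > 0, ∀ a : ℂ, ‖a‖ ≤ t → c ≤ (1 - ‖a‖ ^ 2) ^ p := by
  set b := 1 - max t 0 ^ 2
  have hb : 0 < b := by nlinarith [le_max_right t 0, max_lt ht one_pos]
  refine ⟨min 1 (b ^ p), lt_min one_pos (Real.rpow_pos_of_pos hb p), fun a ha => ?_⟩
  have hba : b ≤ 1 - ‖a‖ ^ 2 := by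
    nlinarith [norm_nonneg a, (le_max_left t 0), ha.trans (le_max_left t 0)]
  rcases le_total 0 p with hp | hp
  · exact (min_le_right _ _).trans (Real.rpow_le_rpow hb.le hba hp)
  · exact (min_le_left _ _).trans (Real.one_le_rpow_of_pos_of_le_one_of_nonpos (hb.trans_le hba)
      (by nlinarith [norm_nonneg a]) hp)

def diskSup (h : ℂ → ℝ) : ℝ := sSup {x : ℝ | ∃ a : ℂ, ‖a‖ < 1 ∧ x = h a}

section diskSup

variable {h : ℂ → ℝ} {M : ℝ}

lemma le_diskSup (hM : ∀ a : ℂ, ‖a‖ < 1 → h a ≤ M) {a : ℂ} (ha : ‖a‖ < 1) : h a ≤ diskSup h :=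
  le_csSup ⟨M, by rintro _ ⟨b, hb, rfl⟩; exact hM b hb⟩ ⟨a, ha, rfl⟩

lemma diskSup_le (hM : ∀ a : ℂ, ‖a‖ < 1 → h a ≤ M) : diskSup h ≤ M :=
  csSup_le ⟨h 0, 0, by simp, rfl⟩ (by rintro _ ⟨b, hb, rfl⟩; exact hM b hb)

end diskSup

section limsup

variable {f : ℂ → ℝ} {g : ℝ → ℂ → ℝ} {M : ℝ}

lemma limsup_toBoundary_le_limsup_diskSup (hg0 : ∀ s a, ‖a‖ < 1 → 0 ≤ g s a)
    (hgf : ∀ s a, ‖a‖ < 1 → g s a ≤ f a) (hfM : ∀ a, ‖a‖ < 1 → f a ≤ M)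
    (hg_eq : ∀ s < 1, ∀ᶠ a in toBoundary, g s a = f a) :
    limsup f toBoundary ≤ limsup (fun s => diskSup (g s)) (𝓝[<] 1) := by
  have hgM (s : ℝ) (a : ℂ) (ha : ‖a‖ < 1) : g s a ≤ M := (hgf s a ha).trans (hfM a ha)
  refine le_limsup_of_frequently_le (Eventually.frequently ?_)
    (isBoundedUnder_of ⟨M, fun s => diskSup_le (hgM s)⟩)
  filter_upwards [self_mem_nhdsWithin] with s hs
  refine limsup_le_of_le (isCoboundedUnder_le_of_eventually_le _ (x := 0) ?_) ?_
  · filter_upwards [eventually_norm_lt_one_toBoundary] with a ha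
    exact (hg0 0 a ha).trans (hgf 0 a ha)
  · filter_upwards [eventually_norm_lt_one_toBoundary, hg_eq s hs] with a ha heq
    exact heq ▸ le_diskSup (hgM s) ha

lemma limsup_diskSup_le_limsup_toBoundary (hg0 : ∀ s a, ‖a‖ < 1 → 0 ≤ g s a)
    (hgf : ∀ s a, ‖a‖ < 1 → g s a ≤ f a) (hfM : ∀ a, ‖a‖ < 1 → f a ≤ M)
    (hg_small : ∀ t < 1, ∀ ε > 0, ∀ᶠ s in 𝓝[<] 1, ∀ a : ℂ, ‖a‖ ≤ t → g s a ≤ ε) :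
    limsup (fun s => diskSup (g s)) (𝓝[<] 1) ≤ limsup f toBoundary := by
  have hf0 : ∀ᶠ a in toBoundary, 0 ≤ f a := by
    filter_upwards [eventually_norm_lt_one_toBoundary] with a ha
    exact (hg0 0 a ha).trans (hgf 0 a ha)
  have hf_bdd : IsBoundedUnder (· ≤ ·) toBoundary f :=
    isBoundedUnder_of_eventually_le (eventually_norm_lt_one_toBoundary.mono hfM)
  have hL : 0 ≤ limsup f toBoundary := le_limsup_of_frequently_le hf0.frequently hf_bdd
  refine le_of_forall_pos_le_add fun ε hε => ?_
  obtain ⟨t, ht1, ht⟩ := toBoundary_basis.eventually_iff.1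
    (eventually_lt_of_limsup_lt (lt_add_of_pos_right _ hε) hf_bdd)
  refine limsup_le_of_le (isCoboundedUnder_le_of_le _ fun s =>
    (hg0 s 0 (by simp)).trans (le_diskSup (fun a ha => (hgf s a ha).trans (hfM a ha)) (by simp)))
    ?_
  filter_upwards [hg_small t ht1 ε hε] with s hs
  refine diskSup_le fun a ha => ?_
  rcases le_or_gt ‖a‖ t with hat | hat
  · linarith [hs a hat]
  · exact (hgf s a ha).trans (ht ⟨hat, ha⟩).le

end limsup

lemma eventually_measure_inter_norm_ge_div_le (μ : Measure ℂ) [IsFiniteMeasure μ]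
    (hsupp : μ {z : ℂ | 1 ≤ ‖z‖} = 0) (E : ℂ → Set ℂ) (p : ℝ) {t : ℝ} (ht : t < 1) {ε : ℝ}
    (hε : 0 < ε) :
    ∀ᶠ s in 𝓝[<] 1, ∀ a : ℂ, ‖a‖ ≤ t →
      (μ (E a ∩ {z | s ≤ ‖z‖})).toReal / (1 - ‖a‖ ^ 2) ^ p ≤ ε := by
  obtain ⟨c, hc, hcw⟩ := exists_pos_le_one_sub_norm_sq_rpow p ht
  have htail := tendsto_measure_setOf_le_nhdsLT μ measurable_norm 1
  rw [hsupp] at htail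
  filter_upwards [htail.eventually_lt_const (ENNReal.ofReal_pos.2 (mul_pos hε hc))] with s hs a ha
  calc (μ (E a ∩ {z | s ≤ ‖z‖})).toReal / (1 - ‖a‖ ^ 2) ^ p
      ≤ (μ {z : ℂ | s ≤ ‖z‖}).toReal / c :=
        div_le_div₀ ENNReal.toReal_nonneg
          (ENNReal.toReal_mono (measure_ne_top _ _) (measure_mono inter_subset_right)) hc (hcw a ha)
    _ ≤ ε := (div_le_iff₀ hc).2 (ENNReal.toReal_le_of_le_ofReal (by positivity) hs.le)

theorem limsup_carleson_eq_limsup_tail_general (μ : Measure ℂ) [IsFiniteMeasure μ]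
    (hsupp : μ {z : ℂ | 1 ≤ ‖z‖} = 0)
    (α lam r : ℝ) (hr1 : r < 1)
    (hcar : ∃ M : ℝ, ∀ a : ℂ, ‖a‖ < 1 →
      (μ (DeltaD a r)).toReal ≤ M * (1 - ‖a‖ ^ 2) ^ ((2 + α) * lam)) :
    Filter.limsup (fun a : ℂ =>
        (μ (DeltaD a r)).toReal / (1 - ‖a‖ ^ 2) ^ ((2 + α) * lam))
      toBoundary =
      Filter.limsup (fun s : ℝ =>
          sSup {x : ℝ | ∃ a : ℂ, ‖a‖ < 1 ∧
            x = (μ (DeltaD a r ∩ {z : ℂ | s ≤ ‖z‖})).toReal /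
              (1 - ‖a‖ ^ 2) ^ ((2 + α) * lam)})
        (nhdsWithin 1 (Set.Iio 1)) := by
  obtain ⟨M, hM⟩ := hcar
  set p := (2 + α) * lam
  have hw (a : ℂ) (ha : ‖a‖ < 1) : 0 < (1 - ‖a‖ ^ 2) ^ p :=
    Real.rpow_pos_of_pos (by nlinarith [norm_nonneg a]) p
  have hg0 (s : ℝ) (a : ℂ) (ha : ‖a‖ < 1) :
      0 ≤ (μ (DeltaD a r ∩ {z | s ≤ ‖z‖})).toReal / (1 - ‖a‖ ^ 2) ^ p :=
    div_nonneg ENNReal.toReal_nonneg (hw a ha).le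
  have hgf (s : ℝ) (a : ℂ) (ha : ‖a‖ < 1) :
      (μ (DeltaD a r ∩ {z | s ≤ ‖z‖})).toReal / (1 - ‖a‖ ^ 2) ^ p ≤
        (μ (DeltaD a r)).toReal / (1 - ‖a‖ ^ 2) ^ p :=
    div_le_div_of_nonneg_right
      (ENNReal.toReal_mono (measure_ne_top _ _) (measure_mono inter_subset_left)) (hw a ha).le
  have hfM (a : ℂ) (ha : ‖a‖ < 1) : (μ (DeltaD a r)).toReal / (1 - ‖a‖ ^ 2) ^ p ≤ M :=
    (div_le_iff₀ (hw a ha)).2 (hM a ha)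
  have hg_eq (s : ℝ) (hs : s < 1) : ∀ᶠ a in toBoundary,
      (μ (DeltaD a r ∩ {z | s ≤ ‖z‖})).toReal / (1 - ‖a‖ ^ 2) ^ p =
        (μ (DeltaD a r)).toReal / (1 - ‖a‖ ^ 2) ^ p := by
    filter_upwards [eventually_DeltaD_subset_norm_ge hr1 hs] with a ha
    rw [inter_eq_left.2 ha]
  exact le_antisymm (limsup_toBoundary_le_limsup_diskSup hg0 hgf hfM hg_eq)
    (limsup_diskSup_le_limsup_toBoundary hg0 hgf hfM fun t ht ε hε =>
      eventually_measure_inter_norm_ge_div_le μ hsupp (DeltaD · r) p ht hε)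

theorem limsup_carleson_eq_limsup_tail (μ : Measure ℂ) [IsFiniteMeasure μ]
    (hsupp : μ {z : ℂ | 1 ≤ ‖z‖} = 0)
    (α lam r : ℝ) (hα : -1 < α) (hlam : 0 < lam) (hr0 : 0 < r) (hr1 : r < 1)
    (hcar : ∃ M : ℝ, ∀ a : ℂ, ‖a‖ < 1 →
      (μ (DeltaD a r)).toReal ≤ M * (1 - ‖a‖ ^ 2) ^ ((2 + α) * lam)) :
    Filter.limsup (fun a : ℂ =>
        (μ (DeltaD a r)).toReal / (1 - ‖a‖ ^ 2) ^ ((2 + α) * lam))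
      toBoundary =
      Filter.limsup (fun s : ℝ =>
          sSup {x : ℝ | ∃ a : ℂ, ‖a‖ < 1 ∧
            x = (μ (DeltaD a r ∩ {z : ℂ | s ≤ ‖z‖})).toReal /
              (1 - ‖a‖ ^ 2) ^ ((2 + α) * lam)})
        (nhdsWithin 1 (Set.Iio 1)) :=
  limsup_carleson_eq_limsup_tail_general μ hsupp α lam r hr1 hcar
end
end
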